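/- arXiv:1907.03625 — 3 statements merged into one kernel-verified Lean document; each statement's English description precedes it below -/
import Mathlib

section
/- Let X₁, X₂, ... be a stationary, square-integrable, φ-mixing sequence of real-valued random variables with common cumulative distribution function F. If for some δ ∈ (0,1) the mixing coefficients satisfy φ(r) = O(r^{−4/(1−δ)}) as r → ∞, then sup_{x ∈ ℝ} |F_n(x) − F(x)| → 0 almost surely as n → ∞. -/
open MeasureTheory Filter Set Asymptotics
open scoped ENNReal Topology

/-- Empirical distribution function based on the observations `X 1, ..., X n`. -/
noncomputable def empCDF {Ω : Type*} (X : ℕ → Ω → ℝ) (n : ℕ) (x : ℝ) (ω : Ω) : ℝ :=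
  (n : ℝ)⁻¹ * ∑ i ∈ Finset.Icc 1 n, Set.indicator (Set.Iic x) (1 : ℝ → ℝ) (X i ω)

/-- Stationarity of a sequence indexed from 1. -/
def IsStationarySeq {Ω : Type*} [MeasurableSpace Ω] (P : Measure Ω) (X : ℕ → Ω → ℝ) : Prop :=
  ∀ k h : ℕ, Measure.map (fun ω => fun i : Fin k => X (1 + h + (i : ℕ)) ω) P
    = Measure.map (fun ω => fun i : Fin k => X (1 + (i : ℕ)) ω) P

/-- The φ-mixing coefficient between two sub-σ-algebras. -/
noncomputable def phiCoef {Ω : Type*} [MeasurableSpace Ω] (P : Measure Ω)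
    (m₁ m₂ : MeasurableSpace Ω) : ℝ :=
  sSup {r : ℝ | ∃ A B : Set Ω, MeasurableSet[m₁] A ∧ MeasurableSet[m₂] B ∧ P A ≠ 0 ∧
    r = |(P B).toReal - (P (A ∩ B)).toReal / (P A).toReal|}

/-- The σ-algebra generated by the variables `X i`, `i ∈ s`. -/
def sigmaOf {Ω : Type*} (X : ℕ → Ω → ℝ) (s : Set ℕ) : MeasurableSpace Ω :=
  ⨆ i ∈ s, MeasurableSpace.comap (X i) inferInstance

/-- The φ-mixing coefficient sequence `φ(n) = sup_{k ≥ 1} φ(ℱ₁ᵏ, ℱ_{n+k}^∞)`. -/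
noncomputable def phiSeq {Ω : Type*} [MeasurableSpace Ω] (P : Measure Ω)
    (X : ℕ → Ω → ℝ) (n : ℕ) : ℝ :=
  ⨆ k : {k : ℕ // 1 ≤ k},
    phiCoef P (sigmaOf X (Set.Icc 1 (k : ℕ))) (sigmaOf X (Set.Ici (n + (k : ℕ))))


section
variable {Ω : Type*} {mΩ : MeasurableSpace Ω} (P : Measure Ω) [IsProbabilityMeasure P]
  (m₁ m₂ : MeasurableSpace Ω)

lemma phiSet_mem_zero : (0:ℝ) ∈ {r : ℝ | ∃ A B : Set Ω, MeasurableSet[m₁] A ∧ MeasurableSet[m₂] B ∧ P A ≠ 0 ∧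
    r = |(P B).toReal - (P (A ∩ B)).toReal / (P A).toReal|} := by
  refine ⟨Set.univ, ∅, MeasurableSet.univ, MeasurableSet.empty, ?_, ?_⟩
  · simp
  · simp

lemma phiSet_le_one : ∀ r ∈ {r : ℝ | ∃ A B : Set Ω, MeasurableSet[m₁] A ∧ MeasurableSet[m₂] B ∧ P A ≠ 0 ∧
    r = |(P B).toReal - (P (A ∩ B)).toReal / (P A).toReal|}, r ≤ 1 := by
  rintro r ⟨A, B, -, -, hA, rfl⟩
  have hAfin : P A ≠ ⊤ := measure_ne_top P A
  have ha : 0 < (P A).toReal := ENNReal.toReal_pos hA hAfin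
  have hb0 : 0 ≤ (P B).toReal := ENNReal.toReal_nonneg
  have hb1 : (P B).toReal ≤ 1 := by
    have h := prob_le_one (μ := P) (s := B)
    exact (ENNReal.toReal_le_toReal (measure_ne_top P B) (by simp)).2 h |>.trans (by simp)
  have hc0 : 0 ≤ (P (A ∩ B)).toReal / (P A).toReal := by positivity
  have hc1 : (P (A ∩ B)).toReal / (P A).toReal ≤ 1 := by
    rw [div_le_one ha]
    exact ENNReal.toReal_le_toReal (measure_ne_top _ _) hAfin |>.2
      (measure_mono Set.inter_subset_left)
  rw [abs_sub_le_iff]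
  constructor <;> linarith

lemma phiCoef_nonneg : 0 ≤ @phiCoef Ω mΩ P m₁ m₂ :=
  le_csSup ⟨1, phiSet_le_one P m₁ m₂⟩ (phiSet_mem_zero P m₁ m₂)

lemma phiCoef_le_one : @phiCoef Ω mΩ P m₁ m₂ ≤ 1 :=
  csSup_le ⟨0, phiSet_mem_zero P m₁ m₂⟩ (phiSet_le_one P m₁ m₂)

lemma le_phiCoef {A B : Set Ω} (hA : MeasurableSet[m₁] A) (hB : MeasurableSet[m₂] B)
    (hA0 : P A ≠ 0) :
    |(P B).toReal - (P (A ∩ B)).toReal / (P A).toReal| ≤ @phiCoef Ω mΩ P m₁ m₂ :=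
  le_csSup ⟨1, phiSet_le_one P m₁ m₂⟩ ⟨A, B, hA, hB, hA0, rfl⟩

variable (X : ℕ → Ω → ℝ)

lemma phiSeq_nonneg (n : ℕ) : 0 ≤ @phiSeq Ω mΩ P X n := by
  refine le_trans (phiCoef_nonneg P (sigmaOf X (Set.Icc 1 1)) (sigmaOf X (Set.Ici (n+1)))) ?_
  exact le_ciSup (f := fun k : {k : ℕ // 1 ≤ k} =>
      phiCoef P (sigmaOf X (Set.Icc 1 (k : ℕ))) (sigmaOf X (Set.Ici (n + (k : ℕ)))))
    ⟨1, Set.forall_mem_range.2 fun k => phiCoef_le_one P _ _⟩ ⟨1, le_rfl⟩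

lemma le_phiSeq (n k : ℕ) (hk : 1 ≤ k) :
    @phiCoef Ω mΩ P (sigmaOf X (Set.Icc 1 k)) (sigmaOf X (Set.Ici (n + k))) ≤ @phiSeq Ω mΩ P X n :=
  le_ciSup (f := fun k : {k : ℕ // 1 ≤ k} =>
      phiCoef P (sigmaOf X (Set.Icc 1 (k : ℕ))) (sigmaOf X (Set.Ici (n + (k : ℕ)))))
    ⟨1, Set.forall_mem_range.2 fun k => phiCoef_le_one P _ _⟩ ⟨k, hk⟩

lemma measurable_sigmaOf {s : Set ℕ} {i : ℕ} (hi : i ∈ s) {S : Set ℝ} (hS : MeasurableSet S) :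
    MeasurableSet[sigmaOf X s] (X i ⁻¹' S) := by
  have h : MeasurableSpace.comap (X i) inferInstance ≤ sigmaOf X s := by
    refine le_trans ?_ (le_iSup (fun j => ⨆ _ : j ∈ s, MeasurableSpace.comap (X j) inferInstance) i)
    exact le_iSup (fun _ : i ∈ s => MeasurableSpace.comap (X i) inferInstance) hi
  exact h _ ⟨S, hS, rfl⟩

/-- key covariance bound for events -/
lemma cov_event_bound {S T : Set ℝ} (hS : MeasurableSet S) (hT : MeasurableSet T)
    {i j : ℕ} (hi : 1 ≤ i) (hij : i < j) :
    |(P (X i ⁻¹' S ∩ X j ⁻¹' T)).toReal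
      - (P (X i ⁻¹' S)).toReal * (P (X j ⁻¹' T)).toReal| ≤ @phiSeq Ω mΩ P X (j - i) := by
  set A := X i ⁻¹' S
  set B := X j ⁻¹' T
  by_cases hA0 : P A = 0
  · have h1 : P (A ∩ B) = 0 := measure_mono_null Set.inter_subset_left hA0
    rw [h1, hA0]
    simpa using phiSeq_nonneg P X (j - i)
  · have hkey : |(P B).toReal - (P (A ∩ B)).toReal / (P A).toReal|
        ≤ phiSeq P X (j - i) := by
      refine le_trans (le_phiCoef P (sigmaOf X (Set.Icc 1 i)) (sigmaOf X (Set.Ici (j - i + i)))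
        (measurable_sigmaOf X (Set.mem_Icc.2 ⟨hi, le_rfl⟩) hS) ?_ hA0) (le_phiSeq P X (j - i) i hi)
      exact measurable_sigmaOf X (Set.mem_Ici.2 (by omega)) hT
    have ha : 0 < (P A).toReal := ENNReal.toReal_pos hA0 (measure_ne_top P A)
    have h2 : |(P (A ∩ B)).toReal - (P A).toReal * (P B).toReal|
        = (P A).toReal * |(P B).toReal - (P (A ∩ B)).toReal / (P A).toReal| := by
      have hne : (P A).toReal ≠ 0 := ne_of_gt ha
      have key : (P (A ∩ B)).toReal - (P A).toReal * (P B).toReal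
          = -((P A).toReal * ((P B).toReal - (P (A ∩ B)).toReal / (P A).toReal)) := by
        field_simp; ring
      rw [key, abs_neg, abs_mul, abs_of_pos ha]
    have ha1 : (P A).toReal ≤ 1 := by
      exact (ENNReal.toReal_le_toReal (measure_ne_top P A) (by simp)).2 prob_le_one |>.trans (by simp)
    calc |(P (A ∩ B)).toReal - (P A).toReal * (P B).toReal|
        = (P A).toReal * |(P B).toReal - (P (A ∩ B)).toReal / (P A).toReal| := h2
      _ ≤ 1 * phiSeq P X (j - i) := by
          exact mul_le_mul ha1 hkey (abs_nonneg _) zero_le_one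
      _ = phiSeq P X (j - i) := one_mul _

end

section slln
variable {Ω : Type*} {mΩ : MeasurableSpace Ω} (P : Measure Ω) [IsProbabilityMeasure P]
  (X : ℕ → Ω → ℝ)

lemma stationary_measure_preimage (hXm : ∀ i, Measurable (X i))
    (hstat : ∀ k h : ℕ, Measure.map (fun ω => fun i : Fin k => X (1 + h + (i : ℕ)) ω) P
      = Measure.map (fun ω => fun i : Fin k => X (1 + (i : ℕ)) ω) P)
    {S : Set ℝ} (hS : MeasurableSet S) {i : ℕ} (hi : 1 ≤ i) :
    P (X i ⁻¹' S) = P (X 1 ⁻¹' S) := by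
  have h := hstat 1 (i - 1)
  set C : Set (Fin 1 → ℝ) := (fun f : Fin 1 → ℝ => f 0) ⁻¹' S with hC
  have hCm : MeasurableSet C := (measurable_pi_apply 0) hS
  have hm1 : Measurable (fun ω => fun j : Fin 1 => X (1 + (i-1) + (j:ℕ)) ω) :=
    measurable_pi_lambda _ fun _ => hXm _
  have hm2 : Measurable (fun ω => fun j : Fin 1 => X (1 + (j:ℕ)) ω) :=
    measurable_pi_lambda _ fun _ => hXm _
  have h2 := congrArg (fun μ => μ C) h
  rw [Measure.map_apply hm1 hCm, Measure.map_apply hm2 hCm] at h2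
  have e1 : (fun ω => fun j : Fin 1 => X (1 + (i-1) + (j:ℕ)) ω) ⁻¹' C = X i ⁻¹' S := by
    ext ω
    simp only [hC, Set.mem_preimage]
    have hidx : 1 + (i-1) + ((0 : Fin 1) : ℕ) = i := by simp; omega
    rw [hidx]
  have e2 : (fun ω => fun j : Fin 1 => X (1 + (j:ℕ)) ω) ⁻¹' C = X 1 ⁻¹' S := by
    ext ω
    simp only [hC, Set.mem_preimage]
    norm_num
  rwa [e1, e2] at h2

end slln

section slln2
variable {Ω : Type*} {mΩ : MeasurableSpace Ω} (P : Measure Ω) [IsProbabilityMeasure P]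
  (X : ℕ → Ω → ℝ)

lemma second_moment_bound (hXm : ∀ i, Measurable (X i))
    (hstat : ∀ k h : ℕ, Measure.map (fun ω => fun i : Fin k => X (1 + h + (i : ℕ)) ω) P
      = Measure.map (fun ω => fun i : Fin k => X (1 + (i : ℕ)) ω) P)
    (hsum : Summable (@phiSeq Ω mΩ P X))
    {S : Set ℝ} (hS : MeasurableSet S) (n : ℕ) :
    ∫ ω, (∑ i ∈ Finset.Icc 1 n,
        ((X i ⁻¹' S).indicator (1:Ω→ℝ) ω - (P (X 1 ⁻¹' S)).toReal))^2 ∂P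
      ≤ n * (1 + 2 * ∑' r, @phiSeq Ω mΩ P X r) := by
  classical
  set A : ℕ → Set Ω := fun i => X i ⁻¹' S with hA
  have hAm : ∀ i, MeasurableSet (A i) := fun i => (hXm i) hS
  set p : ℝ := (P (A 1)).toReal with hp
  have hpi : ∀ i, 1 ≤ i → (P (A i)).toReal = p := fun i hi => by
    rw [hp, hA, stationary_measure_preimage P X hXm hstat hS hi]
  have hp0 : 0 ≤ p := ENNReal.toReal_nonneg
  have hp1 : p ≤ 1 := by
    rw [hp]
    exact (ENNReal.toReal_le_toReal (measure_ne_top _ _) (by simp)).2 prob_le_one |>.trans (by simp)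
  set Y : ℕ → Ω → ℝ := fun i ω => (A i).indicator (1:Ω→ℝ) ω - p with hY
  set Φ : ℝ := ∑' r, @phiSeq Ω mΩ P X r with hPhi
  have hphinn : ∀ r, 0 ≤ @phiSeq Ω mΩ P X r := phiSeq_nonneg P X
  have hPhinn : 0 ≤ Φ := tsum_nonneg hphinn
  -- pointwise product expansion
  have hYmul : ∀ i j, (fun ω => Y i ω * Y j ω)
      = fun ω => (A i ∩ A j).indicator (1:Ω→ℝ) ω
        - p * (A i).indicator (1:Ω→ℝ) ω - p * (A j).indicator (1:Ω→ℝ) ω + p^2 := by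
    intro i j
    funext ω
    have h1 : (A i ∩ A j).indicator (1:Ω→ℝ) ω
        = (A i).indicator (1:Ω→ℝ) ω * (A j).indicator (1:Ω→ℝ) ω := by
      rw [Set.inter_indicator_one]; rfl
    simp only [hY]
    linear_combination -h1
  have hIntInd : ∀ (B : Set Ω), MeasurableSet B → Integrable (B.indicator (1:Ω→ℝ)) P :=
    fun B hB => (integrable_const (1:ℝ)).indicator hB
  have hprod_int : ∀ i j, Integrable (fun ω => Y i ω * Y j ω) P := by
    intro i j
    rw [hYmul i j]
    exact ((((hIntInd _ ((hAm i).inter (hAm j))).sub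
      ((hIntInd _ (hAm i)).const_mul p)).sub
      ((hIntInd _ (hAm j)).const_mul p)).add (integrable_const _))
  have hprodeq : ∀ i j, 1 ≤ i → 1 ≤ j →
      ∫ ω, Y i ω * Y j ω ∂P = (P (A i ∩ A j)).toReal - p^2 := by
    intro i j hi hj
    rw [hYmul i j]
    rw [integral_add, integral_sub, integral_sub, integral_indicator_one ((hAm i).inter (hAm j)),
      integral_const_mul, integral_const_mul, integral_indicator_one (hAm i),
      integral_indicator_one (hAm j), integral_const]
    simp only [measureReal_def]
    rw [hpi i hi, hpi j hj]
    · simp only [measure_univ, ENNReal.toReal_one, smul_eq_mul, one_mul]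
      ring
    · exact hIntInd _ ((hAm i).inter (hAm j))
    · exact (hIntInd _ (hAm i)).const_mul p
    · exact (hIntInd _ ((hAm i).inter (hAm j))).sub ((hIntInd _ (hAm i)).const_mul p)
    · exact (hIntInd _ (hAm j)).const_mul p
    · exact ((hIntInd _ ((hAm i).inter (hAm j))).sub ((hIntInd _ (hAm i)).const_mul p)).sub
        ((hIntInd _ (hAm j)).const_mul p)
    · exact integrable_const _
  have hcov_lt : ∀ i j, 1 ≤ i → i < j →
      |∫ ω, Y i ω * Y j ω ∂P| ≤ @phiSeq Ω mΩ P X (j - i) := by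
    intro i j hi hij
    rw [hprodeq i j hi (by omega)]
    have h := cov_event_bound P X hS hS hi hij
    rw [hpi i hi, hpi j (by omega)] at h
    calc |(P (A i ∩ A j)).toReal - p^2|
        = |(P (A i ∩ A j)).toReal - p * p| := by rw [sq]
      _ ≤ phiSeq P X (j - i) := h
  have hdiag : ∀ i, 1 ≤ i → |∫ ω, Y i ω * Y i ω ∂P| ≤ 1 := by
    intro i hi
    rw [hprodeq i i hi hi, Set.inter_self, hpi i hi]
    rw [abs_le]
    constructor <;> nlinarith
  -- expansion of the square of the sum
  have step1 : ∫ ω, (∑ i ∈ Finset.Icc 1 n, Y i ω)^2 ∂P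
      = ∑ i ∈ Finset.Icc 1 n, ∑ j ∈ Finset.Icc 1 n, ∫ ω, Y i ω * Y j ω ∂P := by
    have e : ∫ ω, (∑ i ∈ Finset.Icc 1 n, Y i ω)^2 ∂P
        = ∫ ω, ∑ i ∈ Finset.Icc 1 n, ∑ j ∈ Finset.Icc 1 n, Y i ω * Y j ω ∂P := by
      refine integral_congr_ae (Filter.Eventually.of_forall fun ω => ?_)
      simp only [sq, Finset.sum_mul_sum]
    rw [e, integral_finset_sum _ (fun i _ => integrable_finset_sum _ fun j _ => hprod_int i j)]
    exact Finset.sum_congr rfl fun i _ => integral_finset_sum _ fun j _ => hprod_int i j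
  rw [step1]
  -- row bound
  have row : ∀ i ∈ Finset.Icc 1 n, ∑ j ∈ Finset.Icc 1 n, ∫ ω, Y i ω * Y j ω ∂P ≤ 1 + 2 * Φ := by
    intro i himem
    obtain ⟨hi1, hin⟩ := Finset.mem_Icc.1 himem
    set f : ℕ → ℝ := fun j => ∫ ω, Y i ω * Y j ω ∂P with hf
    rw [Finset.sum_eq_sum_sdiff_singleton_add himem f,
      ← Finset.sum_filter_add_sum_filter_not ((Finset.Icc 1 n) \ {i}) (· < i) f]
    have hb1 : ∑ j ∈ ((Finset.Icc 1 n) \ {i}).filter (· < i), f j ≤ Φ := by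
      set s1 := ((Finset.Icc 1 n) \ {i}).filter (· < i) with hs1
      have hmem : ∀ j ∈ s1, 1 ≤ j ∧ j < i := by
        intro j hj
        rw [hs1, Finset.mem_filter, Finset.mem_sdiff, Finset.mem_Icc] at hj
        exact ⟨hj.1.1.1, hj.2⟩
      have hb : ∀ j ∈ s1, f j ≤ @phiSeq Ω mΩ P X (i - j) := by
        intro j hj
        obtain ⟨hj1, hji⟩ := hmem j hj
        have hcomm : (fun ω => Y i ω * Y j ω) = fun ω => Y j ω * Y i ω :=
          funext fun ω => mul_comm _ _
        refine (le_abs_self _).trans ?_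
        rw [hf]
        simp only [hcomm]
        exact hcov_lt j i hj1 hji
      refine (Finset.sum_le_sum hb).trans ?_
      have hinj : ∀ x ∈ s1, ∀ y ∈ s1, i - x = i - y → x = y := by
        intro x hx y hy hxy
        have h1 := hmem x hx
        have h2 := hmem y hy
        omega
      rw [← Finset.sum_image hinj]
      exact Summable.sum_le_tsum _ (fun _ _ => hphinn _) hsum
    have hb2 : ∑ j ∈ ((Finset.Icc 1 n) \ {i}).filter (fun j => ¬ j < i), f j ≤ Φ := by
      set s2 := ((Finset.Icc 1 n) \ {i}).filter (fun j => ¬ j < i) with hs2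
      have hmem : ∀ j ∈ s2, i < j := by
        intro j hj
        rw [hs2, Finset.mem_filter, Finset.mem_sdiff, Finset.mem_singleton] at hj
        have := hj.1.2
        omega
      have hb : ∀ j ∈ s2, f j ≤ @phiSeq Ω mΩ P X (j - i) := fun j hj =>
        (le_abs_self _).trans (hcov_lt i j hi1 (hmem j hj))
      refine (Finset.sum_le_sum hb).trans ?_
      have hinj : ∀ x ∈ s2, ∀ y ∈ s2, x - i = y - i → x = y := by
        intro x hx y hy hxy
        have h1 := hmem x hx
        have h2 := hmem y hy
        omega
      rw [← Finset.sum_image hinj]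
      exact Summable.sum_le_tsum _ (fun _ _ => hphinn _) hsum
    have hb3 : f i ≤ 1 := (le_abs_self _).trans (hdiag i hi1)
    linarith
  calc ∑ i ∈ Finset.Icc 1 n, ∑ j ∈ Finset.Icc 1 n, ∫ ω, Y i ω * Y j ω ∂P
      ≤ ∑ _i ∈ Finset.Icc 1 n, (1 + 2 * Φ) := Finset.sum_le_sum row
    _ = n * (1 + 2 * Φ) := by
        rw [Finset.sum_const, Nat.card_Icc]
        simp only [nsmul_eq_mul]
        push_cast
        ring

end slln2

section slln3
variable {Ω : Type*} {mΩ : MeasurableSpace Ω} (P : Measure Ω) [IsProbabilityMeasure P]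
  (X : ℕ → Ω → ℝ)

lemma slln_event (hXm : ∀ i, Measurable (X i))
    (hstat : ∀ k h : ℕ, Measure.map (fun ω => fun i : Fin k => X (1 + h + (i : ℕ)) ω) P
      = Measure.map (fun ω => fun i : Fin k => X (1 + (i : ℕ)) ω) P)
    (hsum : Summable (@phiSeq Ω mΩ P X))
    {S : Set ℝ} (hS : MeasurableSet S) :
    ∀ᵐ ω ∂P, Filter.Tendsto (fun n : ℕ => (n:ℝ)⁻¹ * ∑ i ∈ Finset.Icc 1 n,
      (X i ⁻¹' S).indicator (1:Ω→ℝ) ω) Filter.atTop (nhds ((P (X 1 ⁻¹' S)).toReal)) := by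
  classical
  set A : ℕ → Set Ω := fun i => X i ⁻¹' S with hA
  have hAm : ∀ i, MeasurableSet (A i) := fun i => (hXm i) hS
  set p : ℝ := (P (A 1)).toReal with hp
  have hp0 : 0 ≤ p := ENNReal.toReal_nonneg
  have hp1 : p ≤ 1 := by
    rw [hp]
    exact (ENNReal.toReal_le_toReal (measure_ne_top _ _) (by simp)).2 prob_le_one |>.trans (by simp)
  set Y : ℕ → Ω → ℝ := fun i ω => (A i).indicator (1:Ω→ℝ) ω - p with hY
  set C : ℝ := 1 + 2 * ∑' r, @phiSeq Ω mΩ P X r with hC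
  have hC0 : 0 ≤ C := by
    rw [hC]
    have h : 0 ≤ ∑' r, phiSeq P X r := tsum_nonneg (phiSeq_nonneg P X)
    linarith
  have hmom : ∀ n : ℕ, ∫ ω, (∑ i ∈ Finset.Icc 1 n, Y i ω)^2 ∂P ≤ n * C :=
    second_moment_bound P X hXm hstat hsum hS
  set Sn : ℕ → Ω → ℝ := fun n ω => ∑ i ∈ Finset.Icc 1 n, Y i ω with hSn
  have hSnm : ∀ n, Measurable (Sn n) := fun n =>
    Finset.measurable_sum _ fun i _ => ((measurable_const.indicator (hAm i)).sub measurable_const)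
  have hYabs : ∀ i ω, |Y i ω| ≤ 1 := by
    intro i ω
    by_cases h : ω ∈ A i
    · simp only [hY, Set.indicator_of_mem h, Pi.one_apply]
      rw [abs_le]; constructor <;> linarith
    · simp only [hY, Set.indicator_of_notMem h]
      rw [abs_le]
      constructor <;> simp <;> linarith
  have hSabs : ∀ n ω, |Sn n ω| ≤ (n:ℝ) := by
    intro n ω
    calc |Sn n ω| ≤ ∑ i ∈ Finset.Icc 1 n, |Y i ω| := Finset.abs_sum_le_sum_abs _ _
      _ ≤ ∑ _i ∈ Finset.Icc 1 n, (1:ℝ) := Finset.sum_le_sum fun i _ => hYabs i ω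
      _ = n := by rw [Finset.sum_const, Nat.card_Icc]; simp
  have hSnint2 : ∀ n, Integrable (fun ω => (Sn n ω)^2) P := by
    intro n
    refine Integrable.mono' (integrable_const ((n:ℝ)^2)) ((hSnm n).pow_const 2).aestronglyMeasurable
      (Filter.Eventually.of_forall fun ω => ?_)
    rw [Real.norm_eq_abs, abs_pow]
    exact pow_le_pow_left₀ (abs_nonneg _) (hSabs n ω) 2
  set Z : ℕ → Ω → ℝ := fun n ω => (n:ℝ)⁻¹ * Sn n ω with hZ
  have hZm : ∀ n, Measurable (Z n) := fun n => (hSnm n).const_mul _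
  have hZint2 : ∀ n, Integrable (fun ω => (Z n ω)^2) P := by
    intro n
    have e : (fun ω => (Z n ω)^2) = fun ω => ((n:ℝ)⁻¹)^2 * (Sn n ω)^2 := by
      funext ω; rw [hZ]; ring
    rw [e]; exact (hSnint2 n).const_mul _
  have hZsq : ∀ n : ℕ, 1 ≤ n → ∫ ω, (Z n ω)^2 ∂P ≤ C / n := by
    intro n hn
    have hnpos : (0:ℝ) < n := by exact_mod_cast hn
    have e : ∫ ω, (Z n ω)^2 ∂P = ((n:ℝ)⁻¹)^2 * ∫ ω, (Sn n ω)^2 ∂P := by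
      rw [← integral_const_mul]
      exact integral_congr_ae (Filter.Eventually.of_forall fun ω => by rw [hZ]; ring)
    rw [e]
    calc ((n:ℝ)⁻¹)^2 * ∫ ω, (Sn n ω)^2 ∂P ≤ ((n:ℝ)⁻¹)^2 * (n * C) :=
          mul_le_mul_of_nonneg_left (hmom n) (by positivity)
      _ = C / n := by field_simp
  -- Borel–Cantelli along squares
  set g : ℕ → Ω → ℝ≥0∞ := fun m ω => ENNReal.ofReal ((Z ((m+1)^2) ω)^2) with hg
  have hgm : ∀ m, Measurable (g m) := fun m =>
    ENNReal.measurable_ofReal.comp ((hZm _).pow_const 2)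
  have hgint : ∀ m, ∫⁻ ω, g m ω ∂P = ENNReal.ofReal (∫ ω, (Z ((m+1)^2) ω)^2 ∂P) := fun m =>
    (ofReal_integral_eq_lintegral_ofReal (hZint2 _)
      (Filter.Eventually.of_forall fun ω => sq_nonneg _)).symm
  have hbound : ∀ m : ℕ, ∫⁻ ω, g m ω ∂P ≤ ENNReal.ofReal (C / (((m:ℝ)+1)^2)) := by
    intro m
    rw [hgint m]
    refine ENNReal.ofReal_le_ofReal ?_
    have h := hZsq ((m+1)^2) (Nat.one_le_pow _ _ (Nat.succ_pos m))
    convert h using 2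
    push_cast
    ring
  have hsum2 : Summable (fun m : ℕ => C / (((m:ℝ)+1)^2)) := by
    have h0 : Summable (fun m : ℕ => 1 / ((m:ℝ))^2) := by
      simpa using Real.summable_one_div_nat_pow.2 one_lt_two
    have h1 : Summable (fun m : ℕ => 1 / (((m:ℝ))+1)^2) := by
      have h2 := (summable_nat_add_iff 1).2 h0
      simpa using h2
    have h3 := h1.mul_left C
    simpa [div_eq_mul_inv, one_div] using h3
  have htsum : ∑' m, ∫⁻ ω, g m ω ∂P < ⊤ := by
    calc ∑' m, ∫⁻ ω, g m ω ∂P ≤ ∑' m : ℕ, ENNReal.ofReal (C / (((m:ℝ)+1)^2)) :=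
          ENNReal.tsum_le_tsum hbound
      _ = ENNReal.ofReal (∑' m : ℕ, C / (((m:ℝ)+1)^2)) :=
          (ENNReal.ofReal_tsum_of_nonneg (fun m => div_nonneg hC0 (by positivity)) hsum2).symm
      _ < ⊤ := ENNReal.ofReal_lt_top
  have hae : ∀ᵐ ω ∂P, ∑' m, g m ω < ⊤ := by
    refine ae_lt_top (Measurable.ennreal_tsum hgm) ?_
    rw [lintegral_tsum (fun m => (hgm m).aemeasurable)]
    exact htsum.ne
  filter_upwards [hae] with ω hω
  have h1 : Filter.Tendsto (fun m => g m ω) Filter.atTop (nhds 0) :=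
    ENNReal.tendsto_atTop_zero_of_tsum_ne_top hω.ne
  have h2 : Filter.Tendsto (fun m => (Z ((m+1)^2) ω)^2) Filter.atTop (nhds 0) := by
    have h := (ENNReal.tendsto_toReal (by simp : (0:ℝ≥0∞) ≠ ⊤)).comp h1
    have e : ENNReal.toReal ∘ (fun m => g m ω) = fun m => (Z ((m+1)^2) ω)^2 :=
      funext fun m => ENNReal.toReal_ofReal (sq_nonneg _)
    rw [e] at h
    simpa using h
  have h3 : Filter.Tendsto (fun m => |Z ((m+1)^2) ω|) Filter.atTop (nhds 0) := by
    have h := (Real.continuous_sqrt.tendsto 0).comp h2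
    have e : Real.sqrt ∘ (fun m => (Z ((m+1)^2) ω)^2) = fun m => |Z ((m+1)^2) ω| :=
      funext fun m => Real.sqrt_sq_eq_abs _
    rw [e] at h
    simpa using h
  have h4 : Filter.Tendsto (fun m => |Z (m^2) ω|) Filter.atTop (nhds 0) := by
    rw [← tendsto_add_atTop_iff_nat 1]
    exact h3
  have key : ∀ n : ℕ, 1 ≤ n → |Z n ω| ≤ |Z ((Nat.sqrt n)^2) ω| + 2 / (Nat.sqrt n : ℝ) := by
    intro n hn
    set m := Nat.sqrt n with hm
    have hm1 : 1 ≤ m := Nat.le_sqrt.2 (by omega)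
    have hm2 : m^2 ≤ n := Nat.sqrt_le' n
    have hm3 : n < (m+1)^2 := Nat.lt_succ_sqrt' n
    have hicc : ∀ k : ℕ, Finset.Icc 1 k = Finset.Ioc 0 k := by
      intro k; rw [← Finset.Icc_add_one_left_eq_Ioc, zero_add]
    have hsplit : Sn n ω = Sn (m^2) ω + ∑ i ∈ Finset.Ioc (m^2) n, Y i ω := by
      rw [hSn]; simp only [hicc]
      exact (Finset.sum_Ioc_consecutive _ (Nat.zero_le _) hm2).symm
    have habs : |∑ i ∈ Finset.Ioc (m^2) n, Y i ω| ≤ ((n - m^2 : ℕ) : ℝ) := by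
      calc |∑ i ∈ Finset.Ioc (m^2) n, Y i ω| ≤ ∑ i ∈ Finset.Ioc (m^2) n, |Y i ω| :=
            Finset.abs_sum_le_sum_abs _ _
        _ ≤ ∑ _i ∈ Finset.Ioc (m^2) n, (1:ℝ) := Finset.sum_le_sum fun i _ => hYabs i ω
        _ = ((n - m^2 : ℕ) : ℝ) := by rw [Finset.sum_const, Nat.card_Ioc]; simp
    have hnpos : (0:ℝ) < n := by exact_mod_cast hn
    have hmpos : (0:ℝ) < m := by exact_mod_cast hm1
    have hm2n : ((m:ℝ))^2 ≤ (n:ℝ) := by exact_mod_cast hm2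
    have hZabs : ∀ k : ℕ, |Z k ω| = |Sn k ω| / k := by
      intro k
      rw [hZ]
      simp only
      rw [abs_mul, abs_inv, Nat.abs_cast, inv_mul_eq_div]
    have hcast : ((n - m^2 : ℕ) : ℝ) ≤ 2*(m:ℝ) := by
      have e : (m+1)^2 = m^2 + 2*m + 1 := by ring
      rw [e] at hm3
      have hnat : n - m^2 ≤ 2*m := by
        generalize hq : m^2 = q at hm2 hm3 ⊢
        omega
      calc ((n - m^2 : ℕ):ℝ) ≤ ((2*m : ℕ):ℝ) := Nat.cast_le.2 hnat
        _ = 2*(m:ℝ) := by push_cast; ring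
    have hnum : |Sn n ω| ≤ |Sn (m^2) ω| + 2*(m:ℝ) := by
      calc |Sn n ω| ≤ |Sn (m^2) ω| + |∑ i ∈ Finset.Ioc (m^2) n, Y i ω| := by
            rw [hsplit]; exact abs_add_le _ _
        _ ≤ |Sn (m^2) ω| + 2*(m:ℝ) := by linarith
    calc |Z n ω| = |Sn n ω| / n := hZabs n
      _ ≤ (|Sn (m^2) ω| + 2*(m:ℝ)) / n := by gcongr
      _ ≤ (|Sn (m^2) ω| + 2*(m:ℝ)) / ((m:ℝ)^2) := by
          exact div_le_div_of_nonneg_left (by positivity) (by positivity) hm2n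
      _ = |Z (m^2) ω| + 2/(m:ℝ) := by
          rw [hZabs (m^2), add_div]
          have hcast2 : ((m^2 : ℕ):ℝ) = (m:ℝ)^2 := by push_cast; ring
          rw [hcast2]
          congr 1
          field_simp
  have h5 : Filter.Tendsto (fun n => |Z n ω|) Filter.atTop (nhds 0) := by
    have hb : Filter.Tendsto (fun m : ℕ => |Z (m^2) ω| + 2/(m:ℝ)) Filter.atTop (nhds 0) := by
      simpa using h4.add (tendsto_const_div_atTop_nhds_zero_nat 2)
    have hsqrt : Filter.Tendsto Nat.sqrt Filter.atTop Filter.atTop :=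
      Filter.tendsto_atTop_atTop.2 fun b => ⟨b*b, fun n hn => Nat.le_sqrt.2 hn⟩
    exact squeeze_zero' (Filter.Eventually.of_forall fun n => abs_nonneg _)
      (Filter.eventually_atTop.2 ⟨1, fun n hn => key n hn⟩) (hb.comp hsqrt)
  have h6 : Filter.Tendsto (fun n => Z n ω) Filter.atTop (nhds 0) :=
    (tendsto_zero_iff_abs_tendsto_zero _).2 h5
  have hfin : ∀ n : ℕ, 1 ≤ n →
      (n:ℝ)⁻¹ * ∑ i ∈ Finset.Icc 1 n, (A i).indicator (1:Ω→ℝ) ω = Z n ω + p := by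
    intro n hn
    have hnpos : (0:ℝ) < n := by exact_mod_cast hn
    have hnne : ((n:ℝ)) ≠ 0 := ne_of_gt hnpos
    rw [hZ, hSn]
    simp only [hY, Finset.sum_sub_distrib, Finset.sum_const, Nat.card_Icc, nsmul_eq_mul]
    have e : (n + 1 - 1 : ℕ) = n := by omega
    rw [e]
    field_simp
    ring
  have hZp : Filter.Tendsto (fun n => Z n ω + p) Filter.atTop (nhds p) := by
    simpa using h6.add_const p
  exact hZp.congr' (Filter.eventually_atTop.2 ⟨1, fun n hn => (hfin n hn).symm⟩)

end slln3

section cdf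
variable {Ω : Type*} {mΩ : MeasurableSpace Ω} (P : Measure Ω) [IsProbabilityMeasure P]
  (X : ℕ → Ω → ℝ)

lemma cdf_mono : Monotone (fun x => (P (X 1 ⁻¹' Set.Iic x)).toReal) := fun x y hxy =>
  ENNReal.toReal_mono (measure_ne_top _ _)
    (measure_mono (Set.preimage_mono (Set.Iic_subset_Iic.2 hxy)))

lemma cdf_cross {x y : ℝ} (hxy : x < y) :
    (P (X 1 ⁻¹' Set.Iic x)).toReal ≤ (P (X 1 ⁻¹' Set.Iio y)).toReal :=
  ENNReal.toReal_mono (measure_ne_top _ _)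
    (measure_mono (Set.preimage_mono (fun z hz => lt_of_le_of_lt hz hxy)))

lemma cdf_nonneg' (x : ℝ) : 0 ≤ (P (X 1 ⁻¹' Set.Iic x)).toReal := ENNReal.toReal_nonneg

lemma cdf_le_one' (x : ℝ) : (P (X 1 ⁻¹' Set.Iic x)).toReal ≤ 1 := by
  refine (ENNReal.toReal_mono (by simp) prob_le_one).trans (by simp)

lemma quantile_spec (hXm : ∀ i, Measurable (X i)) {c : ℝ} (hc0 : 0 < c) (hc1 : c < 1) :
    c ≤ (P (X 1 ⁻¹' Set.Iic (sInf {x | c ≤ (P (X 1 ⁻¹' Set.Iic x)).toReal}))).toReal ∧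
    (P (X 1 ⁻¹' Set.Iio (sInf {x | c ≤ (P (X 1 ⁻¹' Set.Iic x)).toReal}))).toReal ≤ c := by
  classical
  set F : ℝ → ℝ := fun x => (P (X 1 ⁻¹' Set.Iic x)).toReal with hFdef
  have hFm : Monotone F := cdf_mono P X
  set s : Set ℝ := {x | c ≤ F x} with hs
  -- nonempty
  have hne : s.Nonempty := by
    have hu : (⋃ m : ℕ, X 1 ⁻¹' Set.Iic (m:ℝ)) = Set.univ := by
      ext ω
      simp only [Set.mem_iUnion, Set.mem_preimage, Set.mem_Iic, Set.mem_univ, iff_true]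
      exact exists_nat_ge (X 1 ω)
    have hup : Filter.Tendsto (fun m : ℕ => P (X 1 ⁻¹' Set.Iic (m:ℝ))) Filter.atTop
        (nhds (P (⋃ m : ℕ, X 1 ⁻¹' Set.Iic (m:ℝ)))) :=
      tendsto_measure_iUnion_atTop
        (fun a b hab => Set.preimage_mono (Set.Iic_subset_Iic.2 (by exact_mod_cast hab)))
    rw [hu, measure_univ] at hup
    have htoReal : Filter.Tendsto (fun m : ℕ => F (m:ℝ)) Filter.atTop (nhds 1) := by
      have h := (ENNReal.tendsto_toReal (by simp : (1:ℝ≥0∞) ≠ ⊤)).comp hup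
      simpa [hFdef, Function.comp_def] using h
    obtain ⟨m, hm⟩ := (htoReal.eventually (eventually_ge_nhds hc1)).exists
    exact ⟨(m:ℝ), hm⟩
  -- bddBelow
  have hbdd : BddBelow s := by
    have hi : (⋂ m : ℕ, X 1 ⁻¹' Set.Iic (-(m:ℝ))) = ∅ := by
      ext ω
      simp only [Set.mem_iInter, Set.mem_preimage, Set.mem_Iic, Set.mem_empty_iff_false,
        iff_false, not_forall, not_le]
      obtain ⟨m, hm⟩ := exists_nat_gt (-(X 1 ω))
      exact ⟨m, by linarith⟩
    have hdown : Filter.Tendsto (fun m : ℕ => P (X 1 ⁻¹' Set.Iic (-(m:ℝ)))) Filter.atTop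
        (nhds (P (⋂ m : ℕ, X 1 ⁻¹' Set.Iic (-(m:ℝ))))) :=
      tendsto_measure_iInter_atTop
        (fun m => ((hXm 1) measurableSet_Iic).nullMeasurableSet)
        (fun a b hab => Set.preimage_mono (Set.Iic_subset_Iic.2 (by
          have : (a:ℝ) ≤ b := by exact_mod_cast hab
          linarith)))
        ⟨0, measure_ne_top _ _⟩
    rw [hi, measure_empty] at hdown
    have htoReal : Filter.Tendsto (fun m : ℕ => F (-(m:ℝ))) Filter.atTop (nhds 0) := by
      have h := (ENNReal.tendsto_toReal (by simp : (0:ℝ≥0∞) ≠ ⊤)).comp hdown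
      simpa [hFdef, Function.comp_def] using h
    obtain ⟨m, hm⟩ := (htoReal.eventually (eventually_lt_nhds hc0)).exists
    refine ⟨-(m:ℝ), fun x hx => ?_⟩
    by_contra hcon
    push_neg at hcon
    have : F x ≤ F (-(m:ℝ)) := hFm hcon.le
    have hcx : c ≤ F x := hx
    linarith
  set t : ℝ := sInf s with ht
  constructor
  · -- c ≤ F t, by right continuity
    have hseq : Filter.Tendsto (fun m : ℕ => F (t + 1/((m:ℝ)+1))) Filter.atTop (nhds (F t)) := by
      have hiI : (⋂ m : ℕ, X 1 ⁻¹' Set.Iic (t + 1/((m:ℝ)+1))) = X 1 ⁻¹' Set.Iic t := by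
        ext ω
        simp only [Set.mem_iInter, Set.mem_preimage, Set.mem_Iic]
        constructor
        · intro h
          by_contra hcon
          push_neg at hcon
          obtain ⟨m, hm⟩ := exists_nat_one_div_lt (sub_pos.2 hcon)
          have := h m
          linarith
        · intro h m
          have : 0 < 1/((m:ℝ)+1) := by positivity
          linarith
      have hdown : Filter.Tendsto (fun m : ℕ => P (X 1 ⁻¹' Set.Iic (t + 1/((m:ℝ)+1))))
          Filter.atTop (nhds (P (X 1 ⁻¹' Set.Iic t))) := by
        have h := tendsto_measure_iInter_atTop (μ := P)
          (s := fun m : ℕ => X 1 ⁻¹' Set.Iic (t + 1/((m:ℝ)+1)))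
          (fun m => ((hXm 1) measurableSet_Iic).nullMeasurableSet)
          (fun a b hab => Set.preimage_mono (Set.Iic_subset_Iic.2 (by
            have h1 : (a:ℝ) ≤ b := by exact_mod_cast hab
            have h2 : 1/((b:ℝ)+1) ≤ 1/((a:ℝ)+1) := by
              apply one_div_le_one_div_of_le <;> linarith
            linarith)))
          ⟨0, measure_ne_top _ _⟩
        rwa [hiI] at h
      have h := (ENNReal.tendsto_toReal (measure_ne_top _ _)).comp hdown
      simpa [hFdef, Function.comp_def] using h
    refine ge_of_tendsto hseq (Filter.Eventually.of_forall fun m => ?_)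
    have hlt : t < t + 1/((m:ℝ)+1) := by
      have : 0 < 1/((m:ℝ)+1) := by positivity
      linarith
    obtain ⟨z, hz, hz2⟩ := (csInf_lt_iff hbdd hne).1 hlt
    exact le_trans hz (hFm hz2.le)
  · -- G t ≤ c, by left limit
    have hseq2 : Filter.Tendsto (fun m : ℕ => F (t - 1/((m:ℝ)+1))) Filter.atTop
        (nhds ((P (X 1 ⁻¹' Set.Iio t)).toReal)) := by
      have hiU : (⋃ m : ℕ, X 1 ⁻¹' Set.Iic (t - 1/((m:ℝ)+1))) = X 1 ⁻¹' Set.Iio t := by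
        ext ω
        simp only [Set.mem_iUnion, Set.mem_preimage, Set.mem_Iic, Set.mem_Iio]
        constructor
        · rintro ⟨m, hm⟩
          have : 0 < 1/((m:ℝ)+1) := by positivity
          linarith
        · intro h
          obtain ⟨m, hm⟩ := exists_nat_one_div_lt (sub_pos.2 h)
          exact ⟨m, by linarith⟩
      have hup : Filter.Tendsto (fun m : ℕ => P (X 1 ⁻¹' Set.Iic (t - 1/((m:ℝ)+1))))
          Filter.atTop (nhds (P (X 1 ⁻¹' Set.Iio t))) := by
        have h := tendsto_measure_iUnion_atTop (μ := P)
          (s := fun m : ℕ => X 1 ⁻¹' Set.Iic (t - 1/((m:ℝ)+1)))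
          (fun a b hab => Set.preimage_mono (Set.Iic_subset_Iic.2 (by
            have h1 : (a:ℝ) ≤ b := by exact_mod_cast hab
            have h2 : 1/((b:ℝ)+1) ≤ 1/((a:ℝ)+1) := by
              apply one_div_le_one_div_of_le <;> linarith
            linarith)))
        rwa [hiU] at h
      have h := (ENNReal.tendsto_toReal (measure_ne_top _ _)).comp hup
      simpa [hFdef, Function.comp_def] using h
    refine le_of_tendsto hseq2 (Filter.Eventually.of_forall fun m => ?_)
    have hlt : t - 1/((m:ℝ)+1) < t := by
      have : 0 < 1/((m:ℝ)+1) := by positivity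
      linarith
    have hnot := notMem_of_lt_csInf hlt hbdd
    rw [hs, Set.mem_setOf_eq] at hnot
    push_neg at hnot
    exact hnot.le

end cdf

section det

lemma det_bound (E Ep F G : ℝ → ℝ) (k : ℕ) (hk : 2 ≤ k) (t : ℕ → ℝ)
    (hEmono : Monotone E)
    (hE0 : ∀ x, 0 ≤ E x) (hE1 : ∀ x, E x ≤ 1)
    (hcrossE : ∀ x y, x < y → E x ≤ Ep y)
    (hFmono : Monotone F)
    (hF0 : ∀ x, 0 ≤ F x) (hF1 : ∀ x, F x ≤ 1)
    (hcrossF : ∀ x y, x < y → F x ≤ G y)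
    (hquant : ∀ j ∈ Finset.Icc 1 (k-1), (j:ℝ)/k ≤ F (t j) ∧ G (t j) ≤ (j:ℝ)/k)
    (herr : ∀ j ∈ Finset.Icc 1 (k-1), |E (t j) - F (t j)| ≤ 1/k ∧ |Ep (t j) - G (t j)| ≤ 1/k) :
    ∀ x, |E x - F x| ≤ 2/k := by
  classical
  have hk0 : (0:ℝ) < k := by positivity
  intro x
  have hupper : E x - F x ≤ 2/k := by
    set s' := (Finset.Icc 1 (k-1)).filter (fun j => x < t j) with hs'
    by_cases hne : s'.Nonempty
    · set j := s'.min' hne with hj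
      have hjmem : j ∈ s' := Finset.min'_mem _ hne
      rw [hs', Finset.mem_filter] at hjmem
      obtain ⟨hjIcc, hjx⟩ := hjmem
      obtain ⟨hj1, hjk⟩ := Finset.mem_Icc.1 hjIcc
      have h1 : E x ≤ Ep (t j) := hcrossE _ _ hjx
      have h2 := (abs_le.1 (herr j hjIcc).2).2
      have h3 := (hquant j hjIcc).2
      have hEx : E x ≤ (j:ℝ)/k + 1/k := by linarith
      have hFx : ((j:ℝ)-1)/k ≤ F x := by
        rcases eq_or_lt_of_le hj1 with h | h
        · have hjR : (j:ℝ) = 1 := by exact_mod_cast h.symm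
          rw [hjR]
          simpa using hF0 x
        · have hmem2 : (j-1) ∈ Finset.Icc 1 (k-1) := Finset.mem_Icc.2 ⟨by omega, by omega⟩
          have hnot : (j-1) ∉ s' := by
            intro hcon
            have := Finset.min'_le _ _ hcon
            omega
          have hle : t (j-1) ≤ x := by
            by_contra hcon
            push_neg at hcon
            exact hnot (by rw [hs', Finset.mem_filter]; exact ⟨hmem2, hcon⟩)
          have hq := (hquant (j-1) hmem2).1
          have hm := hFmono hle
          have hcast : (((j-1:ℕ)):ℝ) = (j:ℝ) - 1 := by
            have : (1:ℕ) ≤ j := by omega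
            push_cast [Nat.cast_sub this]
            ring
          rw [hcast] at hq
          linarith
      have hid : (j:ℝ)/k + 1/k - ((j:ℝ)-1)/k = 2/k := by ring
      linarith
    · have hmem : (k-1) ∈ Finset.Icc 1 (k-1) := Finset.mem_Icc.2 ⟨by omega, le_rfl⟩
      have hle : t (k-1) ≤ x := by
        by_contra hcon
        push_neg at hcon
        exact hne ⟨k-1, by rw [hs', Finset.mem_filter]; exact ⟨hmem, hcon⟩⟩
      have hq := (hquant (k-1) hmem).1
      have hm := hFmono hle
      have hcast : (((k-1:ℕ)):ℝ) = (k:ℝ) - 1 := by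
        have : (1:ℕ) ≤ k := by omega
        push_cast [Nat.cast_sub this]
        ring
      rw [hcast] at hq
      have hid : 1 - ((k:ℝ)-1)/k = 1/k := by field_simp; ring
      have h12 : 1/(k:ℝ) ≤ 2/k := by gcongr <;> norm_num
      linarith [hE1 x]
  have hlower : F x - E x ≤ 2/k := by
    set s' := (Finset.Icc 1 (k-1)).filter (fun j => t j ≤ x) with hs'
    by_cases hne : s'.Nonempty
    · set j := s'.max' hne with hj
      have hjmem : j ∈ s' := Finset.max'_mem _ hne
      rw [hs', Finset.mem_filter] at hjmem
      obtain ⟨hjIcc, hjx⟩ := hjmem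
      obtain ⟨hj1, hjk⟩ := Finset.mem_Icc.1 hjIcc
      have h1 : E (t j) ≤ E x := hEmono hjx
      have h2 := (abs_le.1 (herr j hjIcc).1).1
      have h3 := (hquant j hjIcc).1
      have hEx : (j:ℝ)/k - 1/k ≤ E x := by linarith
      by_cases hjtop : j = k-1
      · have hcast : ((j:ℕ):ℝ) = (k:ℝ) - 1 := by
          rw [hjtop]
          have : (1:ℕ) ≤ k := by omega
          push_cast [Nat.cast_sub this]
          ring
        rw [hcast] at hEx
        have hid : 1 - (((k:ℝ)-1)/k - 1/k) = 2/k := by field_simp; ring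
        linarith [hF1 x]
      · have hmem2 : (j+1) ∈ Finset.Icc 1 (k-1) := Finset.mem_Icc.2 ⟨by omega, by omega⟩
        have hnot : (j+1) ∉ s' := by
          intro hcon
          have := Finset.le_max' _ _ hcon
          omega
        have hlt : x < t (j+1) := by
          by_contra hcon
          push_neg at hcon
          exact hnot (by rw [hs', Finset.mem_filter]; exact ⟨hmem2, hcon⟩)
        have hq := (hquant (j+1) hmem2).2
        have hcr := hcrossF x (t (j+1)) hlt
        have hcast : (((j+1:ℕ)):ℝ) = (j:ℝ) + 1 := by push_cast; ring
        rw [hcast] at hq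
        have hid : ((j:ℝ)+1)/k - ((j:ℝ)/k - 1/k) = 2/k := by ring
        linarith
    · have hmem : (1:ℕ) ∈ Finset.Icc 1 (k-1) := Finset.mem_Icc.2 ⟨le_rfl, by omega⟩
      have hlt : x < t 1 := by
        by_contra hcon
        push_neg at hcon
        exact hne ⟨1, by rw [hs', Finset.mem_filter]; exact ⟨hmem, hcon⟩⟩
      have hq := (hquant 1 hmem).2
      have hcr := hcrossF x (t 1) hlt
      have h12 : 1/(k:ℝ) ≤ 2/k := by gcongr <;> norm_num
      have hcast : ((1:ℕ):ℝ) = (1:ℝ) := by norm_num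
      rw [hcast] at hq
      linarith [hE0 x]
  exact abs_le.2 ⟨by linarith, hupper⟩

end det

theorem glivenko_cantelli_phi_mixing
    {Ω : Type*} [MeasurableSpace Ω] (P : Measure Ω) [IsProbabilityMeasure P]
    (X : ℕ → Ω → ℝ) (hXm : ∀ i, Measurable (X i))
    (hstat : IsStationarySeq P X)
    (hL2 : ∀ i, 1 ≤ i → MemLp (X i) 2 P)
    -- common cumulative distribution function
    (F : ℝ → ℝ) (hF : ∀ i, 1 ≤ i → ∀ x : ℝ, F x = (P {ω | X i ω ≤ x}).toReal)
    -- φ-mixing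
    (hmix : Tendsto (fun n => phiSeq P X n) atTop (𝓝 0))
    -- φ(r) = O(r^{-4/(1-δ)}) for some δ ∈ (0,1)
    (hrate : ∃ δ : ℝ, 0 < δ ∧ δ < 1 ∧
      (fun r : ℕ => phiSeq P X r) =O[atTop] fun r : ℕ => (r : ℝ) ^ (-(4 : ℝ) / (1 - δ))) :
    ∀ᵐ ω ∂P,
      Tendsto (fun n => ⨆ x : ℝ, |empCDF X n x ω - F x|) atTop (𝓝 0) := by
  classical
  -- summability of the mixing coefficients
  obtain ⟨δ, hδ0, hδ1, hO⟩ := hrate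
  have hsum : Summable (phiSeq P X) := by
    have h1δ : (0:ℝ) < 1 - δ := by linarith
    have hexp : (-(4:ℝ)/(1-δ)) < -1 := by
      rw [div_lt_iff₀ h1δ]
      nlinarith
    exact summable_of_isBigO_nat (Real.summable_nat_rpow.2 hexp) hO
  set F' : ℝ → ℝ := fun x => (P (X 1 ⁻¹' Set.Iic x)).toReal with hF'
  set G' : ℝ → ℝ := fun x => (P (X 1 ⁻¹' Set.Iio x)).toReal with hG'
  have hFF' : ∀ x, F x = F' x := by
    intro x
    rw [hF 1 le_rfl x, hF']
    rfl
  set t : ℕ → ℕ → ℝ := fun k j => sInf {x | ((j:ℝ)/(k:ℝ)) ≤ F' x} with htdef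
  have hae : ∀ᵐ ω ∂P, ∀ k j : ℕ,
      (Tendsto (fun n : ℕ => (n:ℝ)⁻¹ * ∑ i ∈ Finset.Icc 1 n,
        (X i ⁻¹' Set.Iic (t k j)).indicator (1:Ω→ℝ) ω) atTop (𝓝 (F' (t k j)))) ∧
      (Tendsto (fun n : ℕ => (n:ℝ)⁻¹ * ∑ i ∈ Finset.Icc 1 n,
        (X i ⁻¹' Set.Iio (t k j)).indicator (1:Ω→ℝ) ω) atTop (𝓝 (G' (t k j)))) := by
    rw [MeasureTheory.ae_all_iff]
    intro k
    rw [MeasureTheory.ae_all_iff]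
    intro j
    exact (slln_event P X hXm hstat hsum measurableSet_Iic).and
      (slln_event P X hXm hstat hsum measurableSet_Iio)
  filter_upwards [hae] with ω hω
  -- properties of the empirical CDF at this ω
  have hEeq : ∀ n : ℕ, ∀ x : ℝ, empCDF X n x ω
      = (n:ℝ)⁻¹ * ∑ i ∈ Finset.Icc 1 n, (X i ⁻¹' Set.Iic x).indicator (1:Ω→ℝ) ω := by
    intro n x
    rfl
  have hind01 : ∀ (S : Set Ω), (0:ℝ) ≤ S.indicator (1:Ω→ℝ) ω ∧ S.indicator (1:Ω→ℝ) ω ≤ 1 := by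
    intro S
    by_cases h : ω ∈ S
    · simp [Set.indicator_of_mem h]
    · simp [Set.indicator_of_notMem h]
  have hEmono : ∀ n : ℕ, Monotone (fun x => empCDF X n x ω) := by
    intro n x y hxy
    simp only [hEeq]
    refine mul_le_mul_of_nonneg_left (Finset.sum_le_sum fun i _ => ?_) (by positivity)
    exact Set.indicator_le_indicator_of_subset
      (Set.preimage_mono (Set.Iic_subset_Iic.2 hxy)) (fun _ => zero_le_one) ω
  have hE0 : ∀ n : ℕ, ∀ x, 0 ≤ empCDF X n x ω := by
    intro n x
    rw [hEeq]
    refine mul_nonneg (by positivity) (Finset.sum_nonneg fun i _ => (hind01 _).1)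
  have hE1 : ∀ n : ℕ, ∀ x, empCDF X n x ω ≤ 1 := by
    intro n x
    rcases Nat.eq_zero_or_pos n with h | h
    · subst h
      rw [hEeq]
      simp
    · rw [hEeq]
      have hsum1 : ∑ i ∈ Finset.Icc 1 n, (X i ⁻¹' Set.Iic x).indicator (1:Ω→ℝ) ω ≤ (n:ℝ) := by
        calc ∑ i ∈ Finset.Icc 1 n, (X i ⁻¹' Set.Iic x).indicator (1:Ω→ℝ) ω
            ≤ ∑ _i ∈ Finset.Icc 1 n, (1:ℝ) := Finset.sum_le_sum fun i _ => (hind01 _).2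
          _ = n := by rw [Finset.sum_const, Nat.card_Icc]; simp
      have hnpos : (0:ℝ) < n := by exact_mod_cast h
      calc (n:ℝ)⁻¹ * ∑ i ∈ Finset.Icc 1 n, (X i ⁻¹' Set.Iic x).indicator (1:Ω→ℝ) ω
          ≤ (n:ℝ)⁻¹ * n := mul_le_mul_of_nonneg_left hsum1 (by positivity)
        _ = 1 := by field_simp
  have hcrossE : ∀ n : ℕ, ∀ x y : ℝ, x < y → empCDF X n x ω
      ≤ (n:ℝ)⁻¹ * ∑ i ∈ Finset.Icc 1 n, (X i ⁻¹' Set.Iio y).indicator (1:Ω→ℝ) ω := by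
    intro n x y hxy
    rw [hEeq]
    refine mul_le_mul_of_nonneg_left (Finset.sum_le_sum fun i _ => ?_) (by positivity)
    refine Set.indicator_le_indicator_of_subset
      (Set.preimage_mono fun z hz => lt_of_le_of_lt hz hxy) (fun _ => zero_le_one) ω
  have hF'mono : Monotone F' := cdf_mono P X
  have hF'0 : ∀ x, 0 ≤ F' x := cdf_nonneg' P X
  have hF'1 : ∀ x, F' x ≤ 1 := cdf_le_one' P X
  have hcrossF : ∀ x y : ℝ, x < y → F' x ≤ G' y := fun x y hxy => cdf_cross P X hxy
  -- bounded above for the sup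
  have hbdd : ∀ n : ℕ, BddAbove (Set.range fun x : ℝ => |empCDF X n x ω - F x|) := by
    intro n
    refine ⟨2, Set.forall_mem_range.2 fun x => ?_⟩
    have h1 := hE0 n x
    have h2 := hE1 n x
    have h3 := hF'0 x
    have h4 := hF'1 x
    rw [hFF' x, abs_le]
    constructor <;> linarith
  have hsupnn : ∀ n : ℕ, 0 ≤ ⨆ x : ℝ, |empCDF X n x ω - F x| :=
    fun n => le_trans (abs_nonneg _) (le_ciSup (hbdd n) 0)
  -- main tendsto
  rw [Metric.tendsto_atTop]
  intro ε hε
  obtain ⟨k0, hk0⟩ := exists_nat_gt (2/ε)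
  set k := k0 + 2 with hkdef
  have hk2 : 2 ≤ k := by omega
  have hkpos : (0:ℝ) < k := by positivity
  have hkε : 2/(k:ℝ) < ε := by
    have h1 : (k0:ℝ) ≤ k := by exact_mod_cast (by omega : k0 ≤ k)
    rw [div_lt_iff₀ hε] at hk0
    rw [div_lt_iff₀ hkpos]
    nlinarith
  have hquant : ∀ j ∈ Finset.Icc 1 (k-1),
      ((j:ℝ)/k) ≤ F' (t k j) ∧ G' (t k j) ≤ ((j:ℝ)/k) := by
    intro j hj
    obtain ⟨hj1, hjk⟩ := Finset.mem_Icc.1 hj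
    have hc0 : (0:ℝ) < (j:ℝ)/k := by
      have : (0:ℝ) < (j:ℝ) := by exact_mod_cast hj1
      positivity
    have hc1 : (j:ℝ)/k < 1 := by
      rw [div_lt_one hkpos]
      exact_mod_cast (by omega : j < k)
    exact quantile_spec P X hXm hc0 hc1
  have hkinv : (0:ℝ) < 1/k := by positivity
  have herr_ev : ∀ᶠ n : ℕ in atTop, ∀ j ∈ Finset.Icc 1 (k-1),
      |empCDF X n (t k j) ω - F' (t k j)| ≤ 1/k ∧
      |((n:ℝ)⁻¹ * ∑ i ∈ Finset.Icc 1 n, (X i ⁻¹' Set.Iio (t k j)).indicator (1:Ω→ℝ) ω)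
        - G' (t k j)| ≤ 1/k := by
    rw [Filter.eventually_all_finset]
    intro j hj
    have h1 := (hω k j).1
    have h2 := (hω k j).2
    have e1 : ∀ᶠ n : ℕ in atTop, |empCDF X n (t k j) ω - F' (t k j)| ≤ 1/k := by
      obtain ⟨N, hN⟩ := Metric.tendsto_atTop.1 h1 (1/k) hkinv
      refine Filter.eventually_atTop.2 ⟨N, fun n hn => ?_⟩
      have := hN n hn
      rw [Real.dist_eq] at this
      rw [hEeq]
      linarith [le_of_lt this]
    have e2 : ∀ᶠ n : ℕ in atTop,
        |((n:ℝ)⁻¹ * ∑ i ∈ Finset.Icc 1 n, (X i ⁻¹' Set.Iio (t k j)).indicator (1:Ω→ℝ) ω)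
          - G' (t k j)| ≤ 1/k := by
      obtain ⟨N, hN⟩ := Metric.tendsto_atTop.1 h2 (1/k) hkinv
      refine Filter.eventually_atTop.2 ⟨N, fun n hn => ?_⟩
      have := hN n hn
      rw [Real.dist_eq] at this
      linarith [le_of_lt this]
    exact e1.and e2
  obtain ⟨N, hN⟩ := Filter.eventually_atTop.1 herr_ev
  refine ⟨N, fun n hn => ?_⟩
  have hdet := det_bound (fun x => empCDF X n x ω)
    (fun y => (n:ℝ)⁻¹ * ∑ i ∈ Finset.Icc 1 n, (X i ⁻¹' Set.Iio y).indicator (1:Ω→ℝ) ω)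
    F' G' k hk2 (t k) (hEmono n) (hE0 n) (hE1 n) (hcrossE n) hF'mono hF'0 hF'1 hcrossF
    hquant (hN n hn)
  have hsup : (⨆ x : ℝ, |empCDF X n x ω - F x|) ≤ 2/k := by
    refine ciSup_le fun x => ?_
    rw [hFF' x]
    exact hdet x
  rw [Real.dist_eq, sub_zero, abs_of_nonneg (hsupnn n)]
  exact lt_of_le_of_lt hsup hkε
end

section
/- Let X and Y be associated random variables with absolutely continuous distributions whose marginal densities f_X and f_Y are bounded by M. Then for every T > 0 and all x, y ∈ ℝ, Cov(1_{(−∞,x]}(X), 1_{(−∞,y]}(Y)) ≤ M*·(T²·Cov(X,Y) + 1/T), where M* = max(2/π², 45M). -/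
open MeasureTheory Filter Set
open scoped ENNReal Topology

/-- Covariance of two real random variables (when the relevant integrals exist). -/
noncomputable def cov {Ω : Type*} [MeasurableSpace Ω] (P : Measure Ω) (U V : Ω → ℝ) : ℝ :=
  ∫ ω, U ω * V ω ∂P - (∫ ω, U ω ∂P) * ∫ ω, V ω ∂P

/-- The pair `(X, Y)` is associated : for all coordinatewise nondecreasing `f, g : ℝ² → ℝ`
for which the covariance exists, `Cov(f(X,Y), g(X,Y)) ≥ 0`. -/
def AssocPair {Ω : Type*} [MeasurableSpace Ω] (P : Measure Ω) (X Y : Ω → ℝ) : Prop :=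
  ∀ f g : ℝ × ℝ → ℝ, Measurable f → Measurable g → Monotone f → Monotone g →
    Integrable (fun ω => f (X ω, Y ω)) P → Integrable (fun ω => g (X ω, Y ω)) P →
    Integrable (fun ω => f (X ω, Y ω) * g (X ω, Y ω)) P →
    0 ≤ cov P (fun ω => f (X ω, Y ω)) (fun ω => g (X ω, Y ω))

section aux

variable {Ω : Type*} [MeasurableSpace Ω] (P : Measure Ω) [IsProbabilityMeasure P]

/-- clamp function: piecewise linear approximation to the indicator of `(a, ∞)`. -/
noncomputable def clampA (l a u : ℝ) : ℝ := min 1 (max 0 (l * (u - a)))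

lemma clampA_nonneg (l a u : ℝ) : 0 ≤ clampA l a u :=
  le_min zero_le_one (le_max_left _ _)

lemma clampA_le_one (l a u : ℝ) : clampA l a u ≤ 1 := min_le_left _ _

lemma clampA_mono (hl : 0 ≤ l) (a : ℝ) : Monotone (clampA l a) := by
  intro u v huv
  unfold clampA
  have : l * (u - a) ≤ l * (v - a) := by nlinarith
  exact min_le_min le_rfl (max_le_max le_rfl this)

lemma clampA_slope (hl : 0 ≤ l) (a u v : ℝ) (huv : u ≤ v) :
    clampA l a v - clampA l a u ≤ l * (v - u) := by
  unfold clampA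
  simp only [min_def, max_def]
  split_ifs <;> nlinarith

lemma clampA_measurable (l a : ℝ) : Measurable (clampA l a) := by
  unfold clampA
  exact (measurable_const.min ((measurable_const.max ((measurable_id.sub_const a).const_mul l))))

lemma clampA_le_ind (hl : 0 < l) (a u : ℝ) :
    clampA l a u ≤ (Ioi a).indicator (1 : ℝ → ℝ) u := by
  rcases le_or_gt u a with h | h
  · have h0 : l * (u - a) ≤ 0 := by nlinarith
    have : clampA l a u = 0 := by
      unfold clampA; rw [max_eq_left h0]; exact min_eq_right zero_le_one
    rw [this]
    exact Set.indicator_nonneg (fun _ _ => zero_le_one) u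
  · have : (Ioi a).indicator (1 : ℝ → ℝ) u = 1 := by
      simp [Set.indicator_apply, Set.mem_Ioi, h]
    rw [this]; exact clampA_le_one _ _ _

lemma ind_sub_clampA_le (hl : 0 < l) (a u : ℝ) :
    (Ioi a).indicator (1 : ℝ → ℝ) u - clampA l a u
      ≤ (Ioc a (a + 1/l)).indicator (1 : ℝ → ℝ) u := by
  rcases le_or_gt u a with h | h
  · have hA : (Ioi a).indicator (1 : ℝ → ℝ) u = 0 := by
      simp [Set.indicator_apply, Set.mem_Ioi, not_lt.mpr h]
    rw [hA]
    have h1 := clampA_nonneg l a u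
    have h2 : (0:ℝ) ≤ (Ioc a (a + 1/l)).indicator (1 : ℝ → ℝ) u :=
      Set.indicator_nonneg (fun _ _ => zero_le_one) u
    linarith
  · rcases le_or_gt u (a + 1/l) with h2 | h2
    · have hI : (Ioc a (a + 1/l)).indicator (1 : ℝ → ℝ) u = 1 := by
        rw [one_div] at h2; simp [Set.indicator_apply, Set.mem_Ioc, h, h2]
      have hA : (Ioi a).indicator (1 : ℝ → ℝ) u = 1 := by
        simp [Set.indicator_apply, Set.mem_Ioi, h]
      rw [hI, hA]
      linarith [clampA_nonneg l a u]
    · have h1 : (1:ℝ) ≤ l * (u - a) := by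
        have : 1/l < u - a := by linarith
        calc (1:ℝ) = l * (1/l) := by field_simp
          _ ≤ l * (u - a) := by nlinarith
      have hc : clampA l a u = 1 := by
        unfold clampA
        rw [max_eq_right (le_trans zero_le_one h1), min_eq_left h1]
      have hA : (Ioi a).indicator (1 : ℝ → ℝ) u = 1 := by
        simp [Set.indicator_apply, Set.mem_Ioi, h]
      rw [hc, hA]
      have : (0:ℝ) ≤ (Ioc a (a + 1/l)).indicator (1 : ℝ → ℝ) u :=
        Set.indicator_nonneg (fun _ _ => zero_le_one) u
      linarith

end aux

section aux2

variable {Ω : Type*} [MeasurableSpace Ω] {P : Measure Ω} [IsProbabilityMeasure P]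

lemma int_bdd {h : Ω → ℝ} (hm : Measurable h) {C : ℝ} (hb : ∀ ω, |h ω| ≤ C) :
    Integrable h P :=
  (integrable_const C).mono' hm.aestronglyMeasurable
    (ae_of_all _ fun ω => by simpa [Real.norm_eq_abs] using hb ω)

omit [IsProbabilityMeasure P] in
lemma cov_comm (U V : Ω → ℝ) : cov P U V = cov P V U := by
  unfold cov
  rw [show (fun ω => U ω * V ω) = fun ω => V ω * U ω from funext fun ω => mul_comm _ _]
  ring

lemma cov_lin_left (a : ℝ) (U V W : Ω → ℝ) (hU : Integrable U P) (hV : Integrable V P)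
    (hUW : Integrable (fun ω => U ω * W ω) P) (hVW : Integrable (fun ω => V ω * W ω) P) :
    cov P (fun ω => a * U ω - V ω) W = a * cov P U W - cov P V W := by
  unfold cov
  have e1 : (fun ω => (a * U ω - V ω) * W ω) = fun ω => a * (U ω * W ω) - V ω * W ω :=
    funext fun ω => by ring
  rw [e1, integral_sub (hUW.const_mul a) hVW, integral_const_mul]
  have e2 : (fun ω => a * U ω - V ω) = fun ω => a * U ω - V ω := rfl
  simp only
  rw [integral_sub (hU.const_mul a) hV, integral_const_mul]
  ring

lemma cov_lin_right (a : ℝ) (U V W : Ω → ℝ) (hU : Integrable U P) (hV : Integrable V P)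
    (hW : Integrable W P)
    (hUV : Integrable (fun ω => U ω * V ω) P) (hUW : Integrable (fun ω => U ω * W ω) P) :
    cov P U (fun ω => a * V ω - W ω) = a * cov P U V - cov P U W := by
  rw [cov_comm U, cov_lin_left a V W U hV hW
      (hUV.congr (ae_of_all _ fun ω => mul_comm _ _))
      (hUW.congr (ae_of_all _ fun ω => mul_comm _ _)),
    cov_comm V U, cov_comm W U]

lemma cov_one_sub (U V : Ω → ℝ) (hU : Integrable U P) (hV : Integrable V P)
    (hUV : Integrable (fun ω => U ω * V ω) P) :
    cov P (fun ω => 1 - U ω) (fun ω => 1 - V ω) = cov P U V := by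
  unfold cov
  have e : (fun ω => (1 - U ω) * (1 - V ω)) = fun ω => 1 - U ω - V ω + U ω * V ω :=
    funext fun ω => by ring
  have h1U : Integrable (fun ω => 1 - U ω) P := (integrable_const 1).sub hU
  have h1V : Integrable (fun ω => 1 - V ω) P := (integrable_const 1).sub hV
  have h1UV : Integrable (fun ω => 1 - U ω - V ω) P := h1U.sub hV
  beta_reduce
  rw [e, integral_add h1UV hUV, integral_sub h1U hV,
      integral_sub (integrable_const 1) hU,
      integral_sub (integrable_const 1) hV, integral_const]
  simp only [measure_univ, probReal_univ, ENNReal.toReal_one, smul_eq_mul, mul_one, one_smul]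
  ring

lemma map_Ioc_le {X : Ω → ℝ} (hXm : Measurable X) {fX : ℝ → ℝ} {M : ℝ} (hM : 0 ≤ M)
    (hfX_bdd : ∀ u, fX u ≤ M)
    (hdX : Measure.map X P = MeasureTheory.volume.withDensity fun u => ENNReal.ofReal (fX u))
    (a b : ℝ) (hab : a ≤ b) :
    ∫ ω, (Ioc a b).indicator (1 : ℝ → ℝ) (X ω) ∂P ≤ M * (b - a) := by
  · have hmeas : MeasurableSet (Ioc a b) := measurableSet_Ioc
    have h1 : ∫ ω, (Ioc a b).indicator (1 : ℝ → ℝ) (X ω) ∂P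
        = ((Measure.map X P) (Ioc a b)).toReal := by
      rw [← measureReal_def, ← integral_indicator_one hmeas]
      exact (integral_map hXm.aemeasurable
        ((measurable_one.indicator hmeas).aestronglyMeasurable)).symm
    rw [h1, hdX, withDensity_apply _ hmeas]
    have h2 : ∫⁻ u in Ioc a b, ENNReal.ofReal (fX u) ≤ ENNReal.ofReal (M * (b - a)) := by
      calc ∫⁻ u in Ioc a b, ENNReal.ofReal (fX u)
          ≤ ∫⁻ _ in Ioc a b, ENNReal.ofReal M := lintegral_mono fun u =>
            ENNReal.ofReal_le_ofReal (hfX_bdd u)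
        _ = ENNReal.ofReal M * volume (Ioc a b) := setLIntegral_const _ _
        _ = ENNReal.ofReal (M * (b - a)) := by
            rw [Real.volume_Ioc, ← ENNReal.ofReal_mul hM]
    calc (∫⁻ u in Ioc a b, ENNReal.ofReal (fX u)).toReal
        ≤ (ENNReal.ofReal (M * (b - a))).toReal :=
          ENNReal.toReal_mono ENNReal.ofReal_ne_top h2
      _ = M * (b - a) := ENNReal.toReal_ofReal (by nlinarith)

end aux2

set_option maxHeartbeats 2000000 in
theorem cov_indicator_le_of_associated
    {Ω : Type*} [MeasurableSpace Ω] (P : Measure Ω) [IsProbabilityMeasure P]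
    (X Y : Ω → ℝ) (hXm : Measurable X) (hYm : Measurable Y)
    (hassoc : AssocPair P X Y)
    -- the covariance of X and Y exists
    (hXi : Integrable X P) (hYi : Integrable Y P)
    (hXYi : Integrable (fun ω => X ω * Y ω) P)
    -- absolutely continuous distributions with densities bounded by M
    (M : ℝ) (fX fY : ℝ → ℝ)
    (hfX_nonneg : ∀ x, 0 ≤ fX x) (hfY_nonneg : ∀ x, 0 ≤ fY x)
    (hfX_bdd : ∀ x, fX x ≤ M) (hfY_bdd : ∀ x, fY x ≤ M)
    (hdX : Measure.map X P = MeasureTheory.volume.withDensity fun x => ENNReal.ofReal (fX x))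
    (hdY : Measure.map Y P = MeasureTheory.volume.withDensity fun x => ENNReal.ofReal (fY x)) :
    ∀ T : ℝ, 0 < T → ∀ x y : ℝ,
      cov P (fun ω => Set.indicator (Set.Iic x) (1 : ℝ → ℝ) (X ω))
            (fun ω => Set.indicator (Set.Iic y) (1 : ℝ → ℝ) (Y ω))
        ≤ max (2 / Real.pi ^ 2) (45 * M) * (T ^ 2 * cov P X Y + 1 / T) := by
  intro T hT x y
  have hM0 : 0 ≤ M := le_trans (hfX_nonneg 0) (hfX_bdd 0)
  set c : ℝ := max (2 / Real.pi ^ 2) (45 * M) with hcdef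
  have hpi : Real.pi < 3.15 := Real.pi_lt_d2
  have hpi0 : 0 < Real.pi := Real.pi_pos
  have hc5 : (1:ℝ)/5 ≤ c := by
    refine le_trans ?_ (le_max_left _ _)
    rw [div_le_div_iff₀ (by norm_num) (by positivity)]
    nlinarith
  have hc0 : (0:ℝ) < c := lt_of_lt_of_le (by norm_num) hc5
  set l : ℝ := Real.sqrt c * T with hldef
  have hsc0 : 0 < Real.sqrt c := Real.sqrt_pos.mpr hc0
  have hl : 0 < l := mul_pos hsc0 hT
  -- indicator and clamp functions of X and Y
  set A : Ω → ℝ := fun ω => (Ioi x).indicator (1:ℝ→ℝ) (X ω) with hAdef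
  set B : Ω → ℝ := fun ω => (Ioi y).indicator (1:ℝ→ℝ) (Y ω) with hBdef
  set F : Ω → ℝ := fun ω => clampA l x (X ω) with hFdef
  set G : Ω → ℝ := fun ω => clampA l y (Y ω) with hGdef
  -- basic bounds
  have hindabs : ∀ (s : Set ℝ) (u : ℝ), |s.indicator (1:ℝ→ℝ) u| ≤ 1 := by
    intro s u; by_cases h : u ∈ s <;> simp [Set.indicator_apply, h]
  have hind0 : ∀ (s : Set ℝ) (u : ℝ), 0 ≤ s.indicator (1:ℝ→ℝ) u :=
    fun s u => Set.indicator_nonneg (fun _ _ => zero_le_one) u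
  have hind1 : ∀ (s : Set ℝ) (u : ℝ), s.indicator (1:ℝ→ℝ) u ≤ 1 := by
    intro s u; by_cases h : u ∈ s <;> simp [Set.indicator_apply, h]
  have hFabs : ∀ ω, |F ω| ≤ 1 := fun ω =>
    abs_le.mpr ⟨by linarith [clampA_nonneg l x (X ω)], clampA_le_one l x (X ω)⟩
  have hGabs : ∀ ω, |G ω| ≤ 1 := fun ω =>
    abs_le.mpr ⟨by linarith [clampA_nonneg l y (Y ω)], clampA_le_one l y (Y ω)⟩
  -- measurability
  have hAm : Measurable A := (measurable_one.indicator measurableSet_Ioi).comp hXm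
  have hBm : Measurable B := (measurable_one.indicator measurableSet_Ioi).comp hYm
  have hFm : Measurable F := (clampA_measurable l x).comp hXm
  have hGm : Measurable G := (clampA_measurable l y).comp hYm
  -- integrability
  have hAi : Integrable A P := int_bdd hAm (fun ω => hindabs _ _)
  have hBi : Integrable B P := int_bdd hBm (fun ω => hindabs _ _)
  have hFi : Integrable F P := int_bdd hFm hFabs
  have hGi : Integrable G P := int_bdd hGm hGabs
  have hABi : Integrable (fun ω => A ω * B ω) P :=
    int_bdd (hAm.mul hBm) (fun ω => by
      rw [abs_mul]
      calc |A ω| * |B ω| ≤ 1 * 1 := mul_le_mul (hindabs _ _) (hindabs _ _) (abs_nonneg _) zero_le_one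
        _ = 1 := by norm_num)
  have hFGi : Integrable (fun ω => F ω * G ω) P :=
    int_bdd (hFm.mul hGm) (fun ω => by
      rw [abs_mul]
      calc |F ω| * |G ω| ≤ 1 * 1 := mul_le_mul (hFabs _) (hGabs _) (abs_nonneg _) zero_le_one
        _ = 1 := by norm_num)
  have hXGi : Integrable (fun ω => X ω * G ω) P :=
    (Integrable.bdd_mul (c := 1) hXi hGm.aestronglyMeasurable
      (ae_of_all _ fun ω => by rw [Real.norm_eq_abs]; exact hGabs ω)).congr
      (ae_of_all _ fun ω => mul_comm _ _)
  have hXYG : Integrable (fun ω => X ω * (l * Y ω - G ω)) P := by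
    have e : (fun ω => X ω * (l * Y ω - G ω)) = fun ω => l * (X ω * Y ω) - X ω * G ω :=
      funext fun ω => by ring
    rw [e]; exact (hXYi.const_mul l).sub hXGi
  have hlXF : Integrable (fun ω => l * X ω - F ω) P := (hXi.const_mul l).sub hFi
  have hlYG : Integrable (fun ω => l * Y ω - G ω) P := (hYi.const_mul l).sub hGi
  have hlXFG : Integrable (fun ω => (l * X ω - F ω) * G ω) P := by
    have e : (fun ω => (l * X ω - F ω) * G ω) = fun ω => l * (X ω * G ω) - F ω * G ω :=
      funext fun ω => by ring
    rw [e]; exact (hXGi.const_mul l).sub hFGi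
  -- Step A : rewrite the Iic indicators via the Ioi indicators
  have hstepA : cov P (fun ω => Set.indicator (Set.Iic x) (1 : ℝ → ℝ) (X ω))
      (fun ω => Set.indicator (Set.Iic y) (1 : ℝ → ℝ) (Y ω)) = cov P A B := by
    have e1 : (fun ω => Set.indicator (Set.Iic x) (1:ℝ→ℝ) (X ω)) = fun ω => 1 - A ω := by
      funext ω
      by_cases h : X ω ≤ x
      · simp [hAdef, Set.indicator_apply, Set.mem_Iic, Set.mem_Ioi, h, not_lt.mpr h]
      · simp [hAdef, Set.indicator_apply, Set.mem_Iic, Set.mem_Ioi, h, lt_of_not_ge h]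
    have e2 : (fun ω => Set.indicator (Set.Iic y) (1:ℝ→ℝ) (Y ω)) = fun ω => 1 - B ω := by
      funext ω
      by_cases h : Y ω ≤ y
      · simp [hBdef, Set.indicator_apply, Set.mem_Iic, Set.mem_Ioi, h, not_lt.mpr h]
      · simp [hBdef, Set.indicator_apply, Set.mem_Iic, Set.mem_Ioi, h, lt_of_not_ge h]
    rw [e1, e2, cov_one_sub A B hAi hBi hABi]
  -- Step B : error bound
  have hAF : ∀ ω, F ω ≤ A ω := fun ω => clampA_le_ind hl x (X ω)
  have hBG : ∀ ω, G ω ≤ B ω := fun ω => clampA_le_ind hl y (Y ω)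
  have hIocXi : Integrable (fun ω => (Ioc x (x + 1/l)).indicator (1:ℝ→ℝ) (X ω)) P :=
    int_bdd ((measurable_one.indicator measurableSet_Ioc).comp hXm) (fun ω => hindabs _ _)
  have hIocYi : Integrable (fun ω => (Ioc y (y + 1/l)).indicator (1:ℝ→ℝ) (Y ω)) P :=
    int_bdd ((measurable_one.indicator measurableSet_Ioc).comp hYm) (fun ω => hindabs _ _)
  have heX : ∫ ω, (A ω - F ω) ∂P ≤ M / l := by
    calc ∫ ω, (A ω - F ω) ∂P ≤ ∫ ω, (Ioc x (x + 1/l)).indicator (1:ℝ→ℝ) (X ω) ∂P :=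
          integral_mono (hAi.sub hFi) hIocXi (fun ω => ind_sub_clampA_le hl x (X ω))
      _ ≤ M * ((x + 1/l) - x) := map_Ioc_le hXm hM0 hfX_bdd hdX x (x + 1/l)
          (by linarith [one_div_pos.mpr hl])
      _ = M / l := by ring
  have heY : ∫ ω, (B ω - G ω) ∂P ≤ M / l := by
    calc ∫ ω, (B ω - G ω) ∂P ≤ ∫ ω, (Ioc y (y + 1/l)).indicator (1:ℝ→ℝ) (Y ω) ∂P :=
          integral_mono (hBi.sub hGi) hIocYi (fun ω => ind_sub_clampA_le hl y (Y ω))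
      _ ≤ M * ((y + 1/l) - y) := map_Ioc_le hYm hM0 hfY_bdd hdY y (y + 1/l)
          (by linarith [one_div_pos.mpr hl])
      _ = M / l := by ring
  have hstepB : cov P A B ≤ cov P F G + M / l + M / l := by
    have hpt : ∀ ω, A ω * B ω ≤ F ω * G ω + (A ω - F ω) + (B ω - G ω) := by
      intro ω
      have h1 := hAF ω; have h2 := hBG ω
      have h3 := clampA_nonneg l x (X ω); have h4 := clampA_nonneg l y (Y ω)
      have h5 := hind1 (Ioi x) (X ω); have h6 := hind1 (Ioi y) (Y ω)
      have h7 := hind0 (Ioi x) (X ω); have h8 := hind0 (Ioi y) (Y ω)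
      nlinarith
    have i1 : Integrable (fun ω => A ω - F ω) P := hAi.sub hFi
    have i2 : Integrable (fun ω => B ω - G ω) P := hBi.sub hGi
    have i3 : Integrable (fun ω => F ω * G ω + (A ω - F ω)) P := hFGi.add i1
    have hsum : Integrable (fun ω => F ω * G ω + (A ω - F ω) + (B ω - G ω)) P := i3.add i2
    have hIab : ∫ ω, A ω * B ω ∂P
        ≤ ∫ ω, F ω * G ω ∂P + ∫ ω, (A ω - F ω) ∂P + ∫ ω, (B ω - G ω) ∂P := by
      calc ∫ ω, A ω * B ω ∂P ≤ ∫ ω, (F ω * G ω + (A ω - F ω) + (B ω - G ω)) ∂P :=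
            integral_mono hABi hsum hpt
        _ = _ := by
            rw [integral_add i3 i2, integral_add hFGi i1]
    have hmeans : (∫ ω, F ω ∂P) * (∫ ω, G ω ∂P) ≤ (∫ ω, A ω ∂P) * (∫ ω, B ω ∂P) :=
      mul_le_mul (integral_mono hFi hAi hAF) (integral_mono hGi hBi hBG)
        (integral_nonneg fun ω => clampA_nonneg l y (Y ω))
        (integral_nonneg fun ω => hind0 _ _)
    unfold cov
    have hsubX : ∫ ω, (A ω - F ω) ∂P = (∫ ω, A ω ∂P) - ∫ ω, F ω ∂P := integral_sub hAi hFi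
    have hsubY : ∫ ω, (B ω - G ω) ∂P = (∫ ω, B ω ∂P) - ∫ ω, G ω ∂P := integral_sub hBi hGi
    linarith [hIab, hmeans, heX, heY]
  -- Step C : Lipschitz / association bound
  have hmonoF : Monotone (fun p : ℝ × ℝ => l * p.1 - clampA l x p.1) := by
    intro p q hpq
    have := clampA_slope hl.le x p.1 q.1 hpq.1
    simp only
    linarith
  have hmonoG2 : Monotone (fun p : ℝ × ℝ => l * p.2 - clampA l y p.2) := by
    intro p q hpq
    have := clampA_slope hl.le y p.2 q.2 hpq.2
    simp only
    linarith
  have hassoc1 : 0 ≤ cov P (fun ω => l * X ω - F ω) G := by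
    exact hassoc (fun p => l * p.1 - clampA l x p.1) (fun p => clampA l y p.2)
      ((measurable_fst.const_mul l).sub ((clampA_measurable l x).comp measurable_fst))
      ((clampA_measurable l y).comp measurable_snd)
      hmonoF (fun p q hpq => clampA_mono hl.le y hpq.2)
      hlXF hGi hlXFG
  have hassoc2 : 0 ≤ cov P X (fun ω => l * Y ω - G ω) := by
    exact hassoc (fun p => p.1) (fun p => l * p.2 - clampA l y p.2)
      measurable_fst
      ((measurable_snd.const_mul l).sub ((clampA_measurable l y).comp measurable_snd))
      (fun p q hpq => hpq.1) hmonoG2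
      hXi hlYG hXYG
  have hc1 : cov P F G ≤ l * cov P X G := by
    have := cov_lin_left (P := P) l X F G hXi hFi hXGi hFGi
    linarith [hassoc1, this.symm ▸ hassoc1]
  have hc2 : cov P X G ≤ l * cov P X Y := by
    have := cov_lin_right (P := P) l X Y G hXi hYi hGi hXYi hXGi
    linarith [this ▸ hassoc2]
  have hstepC : cov P F G ≤ l^2 * cov P X Y := by
    calc cov P F G ≤ l * cov P X G := hc1
      _ ≤ l * (l * cov P X Y) := by nlinarith
      _ = l^2 * cov P X Y := by ring
  -- Step D : arithmetic
  have hl2 : l^2 = c * T^2 := by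
    rw [hldef, mul_pow, Real.sq_sqrt hc0.le]
  have h45 : 45 * M ≤ c := le_max_right _ _
  have h13 : (1:ℝ)/3 ≤ Real.sqrt c := by
    rw [show (1:ℝ)/3 = Real.sqrt ((1/3)^2) from (Real.sqrt_sq (by norm_num)).symm]
    exact Real.sqrt_le_sqrt (by nlinarith)
  have h2M : 2 * M ≤ c * Real.sqrt c := by
    nlinarith [mul_nonneg (sub_nonneg.mpr h45) (Real.sqrt_nonneg c),
      mul_nonneg (by linarith : (0:ℝ) ≤ 45 * M) (sub_nonneg.mpr h13)]
  have hMl : M / l + M / l ≤ c / T := by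
    rw [← add_div, div_le_div_iff₀ hl hT]
    calc (M + M) * T = (2 * M) * T := by ring
      _ ≤ (c * Real.sqrt c) * T := by nlinarith
      _ = c * l := by rw [hldef]; ring
  rw [hstepA]
  calc cov P A B ≤ cov P F G + M / l + M / l := hstepB
    _ ≤ l^2 * cov P X Y + M / l + M / l := by linarith
    _ ≤ c * T^2 * cov P X Y + c / T := by rw [hl2]; linarith
    _ = c * (T ^ 2 * cov P X Y + 1 / T) := by ring
end

section
/- There exists an absolute constant c > 0 such that for any pair of associated random variables X and Y with bounded continuous densities f_X and f_Y respectively, sup_{x,y ∈ ℝ} |P(X ≤ x, Y ≤ y) − P(X ≤ x)·P(Y ≤ y)| ≤ c·(max(sup_x f_X(x), sup_y f_Y(y)))^{2/3}·Cov(X,Y)^{1/3}. -/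
/-!
Write `H(x, y) = P(X ≤ x, Y ≤ y) - P(X ≤ x) P(Y ≤ y)`, the covariance of the indicators of
`{X ≤ x}` and `{Y ≤ y}`; it is nonnegative by association. Clamping `X` to `[x - δ, x]` and `Y` to
`[y - δ, y]` gives `U` and `V` such that `U`, `X - U`, `V`, `Y - V` are nondecreasing functions of
`(X, Y)`, so association gives `Cov(U, V) ≤ Cov(X, Y)`. Hoeffding's identity writes `Cov(U, V)` as
the integral of `H` over the square `[x - δ, x] × [y - δ, y]`, and a density bound `M` makes each
marginal distribution function `M`-Lipschitz, so `H ≥ H(x, y) - 2Mδ` on that square. Hence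
`δ² (H(x, y) - 2Mδ) ≤ Cov(X, Y)`, and `δ = H(x, y) / (3M)` gives `H(x, y)³ ≤ 27 M² Cov(X, Y)`.
-/

open MeasureTheory Filter Set
open scoped ENNReal Topology

open Function

variable {Ω : Type*} [MeasurableSpace Ω] {P : Measure Ω}

lemma cov_sub_left [IsFiniteMeasure P] {A A' B : Ω → ℝ}
    (hA : Integrable A P) (hA' : Integrable A' P)
    (hAB : Integrable (fun ω => A ω * B ω) P) (hA'B : Integrable (fun ω => A' ω * B ω) P) :
    cov P (A - A') B = cov P A B - cov P A' B := by
  simp only [cov, Pi.sub_apply, sub_mul]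
  rw [integral_sub hAB hA'B, integral_sub hA hA']
  ring

lemma cov_sub_right [IsFiniteMeasure P] {A B B' : Ω → ℝ}
    (hB : Integrable B P) (hB' : Integrable B' P)
    (hAB : Integrable (fun ω => A ω * B ω) P) (hAB' : Integrable (fun ω => A ω * B' ω) P) :
    cov P A (B - B') = cov P A B - cov P A B' := by
  simp only [cov, Pi.sub_apply, mul_sub]
  rw [integral_sub hAB hAB', integral_sub hB hB']
  ring

lemma cov_const_sub_const_sub [IsProbabilityMeasure P] {A B : Ω → ℝ} (hA : Integrable A P)
    (hB : Integrable B P) (hAB : Integrable (fun ω => A ω * B ω) P) (c d : ℝ) :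
    cov P (fun ω => c - A ω) (fun ω => d - B ω) = cov P A B := by
  have hexp : ∀ ω, (c - A ω) * (d - B ω) = (c * d - c * B ω) - (d * A ω - A ω * B ω) :=
    fun ω => by ring
  simp only [cov, hexp]
  rw [integral_sub (by fun_prop) (by fun_prop), integral_sub (by fun_prop) (by fun_prop),
    integral_sub (by fun_prop) hAB, integral_sub (by fun_prop) hA, integral_sub (by fun_prop) hB]
  simp only [integral_const, integral_const_mul, probReal_univ, one_smul]
  ring

lemma AssocPair.cov_comp_le_cov [IsFiniteMeasure P] {X Y : Ω → ℝ} (hA : AssocPair P X Y)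
    (hX : Measurable X) (hY : Measurable Y) (hXi : Integrable X P) (hYi : Integrable Y P)
    (hXYi : Integrable (fun ω => X ω * Y ω) P) {φ ψ : ℝ → ℝ} (hφ : Monotone φ) (hψ : Monotone ψ)
    (hφ' : Monotone fun t => t - φ t) (hψ' : Monotone fun t => t - ψ t) {C D : ℝ}
    (hφb : ∀ t, |φ t| ≤ C) (hψb : ∀ t, |ψ t| ≤ D) :
    cov P (fun ω => φ (X ω)) (fun ω => ψ (Y ω)) ≤ cov P X Y := by
  set U := fun ω => φ (X ω)
  set V := fun ω => ψ (Y ω)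
  -- Splitting `X = (X - U) + U` and `Y = (Y - V) + V`, the difference of the two covariances is
  -- a sum of three covariances of nondecreasing functions of `(X, Y)`.
  have hUm : AEStronglyMeasurable U P := (hφ.measurable.comp hX).aestronglyMeasurable
  have hVm : AEStronglyMeasurable V P := (hψ.measurable.comp hY).aestronglyMeasurable
  have hUb : ∀ᵐ ω ∂P, ‖U ω‖ ≤ C := ae_of_all _ fun ω => hφb (X ω)
  have hVb : ∀ᵐ ω ∂P, ‖V ω‖ ≤ D := ae_of_all _ fun ω => hψb (Y ω)
  have hU : Integrable U P := .of_bound hUm C hUb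
  have hV : Integrable V P := .of_bound hVm D hVb
  have hUV : Integrable (fun ω => U ω * V ω) P := hV.bdd_mul hUm hUb
  have hXV : Integrable (fun ω => X ω * V ω) P := hXi.mul_bdd hVm hVb
  have hUY : Integrable (fun ω => U ω * Y ω) P := hYi.bdd_mul hUm hUb
  have hXUY : Integrable (fun ω => (X - U) ω * Y ω) P := by
    simpa only [Pi.sub_def, sub_mul] using hXYi.sub hUY
  have hXUV : Integrable (fun ω => (X - U) ω * V ω) P := by
    simpa only [Pi.sub_def, sub_mul] using hXV.sub hUV
  have hUYV : Integrable (fun ω => U ω * (Y - V) ω) P := by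
    simpa only [Pi.sub_def, mul_sub] using hUY.sub hUV
  have hXUYV : Integrable (fun ω => (X - U) ω * (Y - V) ω) P := by
    simpa only [Pi.sub_def, mul_sub] using hXUY.sub hXUV
  have hmφ : Measurable fun p : ℝ × ℝ => φ p.1 := hφ.measurable.comp measurable_fst
  have hmψ : Measurable fun p : ℝ × ℝ => ψ p.2 := hψ.measurable.comp measurable_snd
  have h₁ : 0 ≤ cov P (X - U) (Y - V) :=
    hA (fun p => p.1 - φ p.1) (fun p => p.2 - ψ p.2) (measurable_fst.sub hmφ)
      (measurable_snd.sub hmψ) (hφ'.comp monotone_fst) (hψ'.comp monotone_snd)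
      (hXi.sub hU) (hYi.sub hV) hXUYV
  have h₂ : 0 ≤ cov P (X - U) V :=
    hA (fun p => p.1 - φ p.1) (fun p => ψ p.2) (measurable_fst.sub hmφ) hmψ
      (hφ'.comp monotone_fst) (hψ.comp monotone_snd) (hXi.sub hU) hV hXUV
  have h₃ : 0 ≤ cov P U (Y - V) :=
    hA (fun p => φ p.1) (fun p => p.2 - ψ p.2) hmφ (measurable_snd.sub hmψ)
      (hφ.comp monotone_fst) (hψ'.comp monotone_snd) hU (hYi.sub hV) hUYV
  rw [cov_sub_right hYi hV hXUY hXUV, cov_sub_left hXi hU hXYi hUY] at h₁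
  rw [cov_sub_right hYi hV hUY hUV] at h₃
  linarith

section CovIntegral

variable {α β : Type*} [MeasurableSpace α] [MeasurableSpace β] {μ : Measure α} {ν : Measure β}
  [IsFiniteMeasure P] [IsFiniteMeasure μ] [IsFiniteMeasure ν] {K : α → Ω → ℝ} {L : β → Ω → ℝ}
  {C D : ℝ}

lemma integrable_uncurry_of_abs_le (hK : Measurable (uncurry K)) (hKb : ∀ s ω, |K s ω| ≤ C) :
    Integrable (uncurry K) (μ.prod P) :=
  .of_bound hK.aestronglyMeasurable C (ae_of_all _ fun q => hKb q.1 q.2)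

lemma integrable_mul_uncurry_of_abs_le (hK : Measurable (uncurry K)) (hL : Measurable (uncurry L))
    (hKb : ∀ s ω, |K s ω| ≤ C) (hLb : ∀ t ω, |L t ω| ≤ D) :
    Integrable (fun q : (α × β) × Ω => K q.1.1 q.2 * L q.1.2 q.2) ((μ.prod ν).prod P) :=
  .of_bound ((hK.comp (measurable_fst.fst.prodMk measurable_snd)).mul
      (hL.comp (measurable_fst.snd.prodMk measurable_snd))).aestronglyMeasurable (C * D)
    (ae_of_all _ fun q => by
      rw [Real.norm_eq_abs, abs_mul]
      exact mul_le_mul (hKb _ _) (hLb _ _) (abs_nonneg _) ((abs_nonneg _).trans (hKb q.1.1 q.2)))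

lemma integrable_cov_prod (hK : Measurable (uncurry K)) (hL : Measurable (uncurry L))
    (hKb : ∀ s ω, |K s ω| ≤ C) (hLb : ∀ t ω, |L t ω| ≤ D) :
    Integrable (fun p : α × β => cov P (K p.1) (L p.2)) (μ.prod ν) :=
  (integrable_mul_uncurry_of_abs_le hK hL hKb hLb).integral_prod_left.sub
    ((integrable_uncurry_of_abs_le hK hKb).integral_prod_left.mul_prod
      (integrable_uncurry_of_abs_le hL hLb).integral_prod_left)

theorem cov_integral_integral (hK : Measurable (uncurry K)) (hL : Measurable (uncurry L))
    (hKb : ∀ s ω, |K s ω| ≤ C) (hLb : ∀ t ω, |L t ω| ≤ D) :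
    cov P (fun ω => ∫ s, K s ω ∂μ) (fun ω => ∫ t, L t ω ∂ν)
      = ∫ p, cov P (K p.1) (L p.2) ∂(μ.prod ν) := by
  have hKL := integrable_mul_uncurry_of_abs_le (P := P) (μ := μ) (ν := ν) hK hL hKb hLb
  have hprod : ∫ ω, (∫ s, K s ω ∂μ) * (∫ t, L t ω ∂ν) ∂P
      = ∫ p : α × β, ∫ ω, K p.1 ω * L p.2 ω ∂P ∂(μ.prod ν) := by
    simp_rw [← integral_prod_mul]
    exact (integral_integral_swap (f := fun (p : α × β) ω => K p.1 ω * L p.2 ω) hKL).symm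
  have hK' := integrable_uncurry_of_abs_le (P := P) (μ := μ) hK hKb
  have hL' := integrable_uncurry_of_abs_le (P := P) (μ := ν) hL hLb
  unfold cov
  rw [hprod, ← integral_integral_swap hK', ← integral_integral_swap hL', ← integral_prod_mul]
  exact (integral_sub hKL.integral_prod_left
    (hK'.integral_prod_left.mul_prod hL'.integral_prod_left)).symm

end CovIntegral

lemma abs_min_max_le {a b : ℝ} (hab : a ≤ b) (c : ℝ) : |min (max c a) b| ≤ max |a| |b| :=
  abs_le_max_abs_abs (le_min (le_max_right c a) hab) (min_le_right _ _)

lemma monotone_min_max (a b : ℝ) : Monotone fun c : ℝ => min (max c a) b :=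
  fun _ _ h => min_le_min_right _ (max_le_max_right _ h)

lemma monotone_sub_min_max (a b : ℝ) : Monotone fun c : ℝ => c - min (max c a) b := by
  intro c d h
  simp only [min_def, max_def]
  split_ifs <;> linarith

lemma min_max_eq_sub_integral_indicator {a b : ℝ} (hab : a ≤ b) (c : ℝ) :
    min (max c a) b = b - ∫ s in Icc a b, (Ici c).indicator 1 s := by
  have hinter : Ici c ∩ Icc a b = Icc (max c a) b := by
    ext t
    simp only [mem_inter_iff, mem_Ici, mem_Icc, max_le_iff]
    tauto
  rw [integral_indicator_one measurableSet_Ici, measureReal_restrict_apply measurableSet_Ici,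
    hinter, Real.volume_real_Icc]
  simp only [min_def, max_def]
  split_ifs <;> linarith

noncomputable def cdfCovariance (P : Measure Ω) (X Y : Ω → ℝ) (s t : ℝ) : ℝ :=
  P.real {ω | X ω ≤ s ∧ Y ω ≤ t} - P.real {ω | X ω ≤ s} * P.real {ω | Y ω ≤ t}

section Cdf

variable {X Y : Ω → ℝ}

lemma cov_indicator_eq_cdfCovariance (hX : Measurable X) (hY : Measurable Y) (s t : ℝ) :
    cov P ({ω | X ω ≤ s}.indicator 1) ({ω | Y ω ≤ t}.indicator 1) = cdfCovariance P X Y s t := by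
  have hXs : MeasurableSet {ω | X ω ≤ s} := measurableSet_le hX measurable_const
  have hYt : MeasurableSet {ω | Y ω ≤ t} := measurableSet_le hY measurable_const
  have hprod : (fun ω => {ω | X ω ≤ s}.indicator (1 : Ω → ℝ) ω * {ω | Y ω ≤ t}.indicator 1 ω)
      = ({ω | X ω ≤ s} ∩ {ω | Y ω ≤ t}).indicator 1 := by
    rw [inter_indicator_one]; rfl
  rw [cov, hprod, integral_indicator_one hXs, integral_indicator_one hYt,
    integral_indicator_one (hXs.inter hYt)]
  rfl

lemma AssocPair.cdfCovariance_nonneg [IsProbabilityMeasure P] (hA : AssocPair P X Y)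
    (hX : Measurable X) (hY : Measurable Y) (s t : ℝ) : 0 ≤ cdfCovariance P X Y s t := by
  -- The indicators of `{X ≤ s}` and `{Y ≤ t}` are nonincreasing: apply association to their
  -- negatives.
  have hanti : ∀ r : ℝ, Monotone fun u : ℝ => 0 - (Iic r).indicator (1 : ℝ → ℝ) u := by
    intro r u v huv
    simp only [indicator_apply, mem_Iic, Pi.one_apply]
    split_ifs <;> linarith
  have hmeas : ∀ r : ℝ, Measurable fun u : ℝ => 0 - (Iic r).indicator (1 : ℝ → ℝ) u :=
    fun r => measurable_const.sub (measurable_one.indicator measurableSet_Iic)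
  have hXs : MeasurableSet {ω | X ω ≤ s} := measurableSet_le hX measurable_const
  have hYt : MeasurableSet {ω | Y ω ≤ t} := measurableSet_le hY measurable_const
  have hXi : Integrable ({ω | X ω ≤ s}.indicator (1 : Ω → ℝ)) P :=
    (integrable_const 1).indicator hXs
  have hYi : Integrable ({ω | Y ω ≤ t}.indicator (1 : Ω → ℝ)) P :=
    (integrable_const 1).indicator hYt
  have hXYi : Integrable (fun ω => {ω | X ω ≤ s}.indicator (1 : Ω → ℝ) ω
      * {ω | Y ω ≤ t}.indicator 1 ω) P := by
    have h : Integrable (({ω | X ω ≤ s} ∩ {ω | Y ω ≤ t}).indicator (1 : Ω → ℝ)) P :=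
      (integrable_const 1).indicator (hXs.inter hYt)
    rwa [inter_indicator_one] at h
  have hXYi' : Integrable (fun ω => (0 - {ω | X ω ≤ s}.indicator (1 : Ω → ℝ) ω)
      * (0 - {ω | Y ω ≤ t}.indicator 1 ω)) P := by
    simpa only [zero_sub, neg_mul_neg] using hXYi
  have h : 0 ≤ cov P (fun ω => 0 - {ω | X ω ≤ s}.indicator 1 ω)
      (fun ω => 0 - {ω | Y ω ≤ t}.indicator 1 ω) :=
    hA (fun p => 0 - (Iic s).indicator 1 p.1) (fun p => 0 - (Iic t).indicator 1 p.2)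
      ((hmeas s).comp measurable_fst) ((hmeas t).comp measurable_snd)
      ((hanti s).comp monotone_fst) ((hanti t).comp monotone_snd)
      ((integrable_const 0).sub hXi) ((integrable_const 0).sub hYi) hXYi'
  rwa [cov_const_sub_const_sub hXi hYi hXYi, cov_indicator_eq_cdfCovariance hX hY] at h

lemma cdfCovariance_le_add [IsFiniteMeasure P] (hX : Measurable X) (hY : Measurable Y)
    {s x t y : ℝ} (hs : s ≤ x) (ht : t ≤ y) :
    cdfCovariance P X Y x y ≤ cdfCovariance P X Y s t
      + (P.real {ω | X ω ≤ x} - P.real {ω | X ω ≤ s})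
      + (P.real {ω | Y ω ≤ y} - P.real {ω | Y ω ≤ t}) := by
  have hsubX : {ω | X ω ≤ s} ⊆ {ω | X ω ≤ x} := fun ω h => le_trans h hs
  have hsubY : {ω | Y ω ≤ t} ⊆ {ω | Y ω ≤ y} := fun ω h => le_trans h ht
  have hsub : {ω | X ω ≤ x ∧ Y ω ≤ y} ⊆ ({ω | X ω ≤ s ∧ Y ω ≤ t}
      ∪ ({ω | X ω ≤ x} \ {ω | X ω ≤ s})) ∪ ({ω | Y ω ≤ y} \ {ω | Y ω ≤ t}) := by
    intro ω ⟨hωx, hωy⟩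
    by_cases hωs : X ω ≤ s
    · by_cases hωt : Y ω ≤ t
      · exact Or.inl (Or.inl ⟨hωs, hωt⟩)
      · exact Or.inr ⟨hωy, hωt⟩
    · exact Or.inl (Or.inr ⟨hωx, hωs⟩)
  have hjoint := (measureReal_mono (μ := P) hsub).trans ((measureReal_union_le _ _).trans
    (add_le_add_left (measureReal_union_le _ _) _))
  rw [measureReal_sdiff hsubX (measurableSet_le hX measurable_const),
    measureReal_sdiff hsubY (measurableSet_le hY measurable_const)] at hjoint
  have hprod : P.real {ω | X ω ≤ s} * P.real {ω | Y ω ≤ t}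
      ≤ P.real {ω | X ω ≤ x} * P.real {ω | Y ω ≤ y} :=
    mul_le_mul (measureReal_mono hsubX) (measureReal_mono hsubY) measureReal_nonneg
      measureReal_nonneg
  unfold cdfCovariance
  linarith

end Cdf

section Density

variable {Z : Ω → ℝ} {f : ℝ → ℝ} {M : ℝ}

lemma cdf_sub_le_of_map_eq_withDensity [IsFiniteMeasure P] (hZ : Measurable Z)
    (hM : 0 ≤ M) (hf : ∀ t, f t ≤ M)
    (hmap : P.map Z = volume.withDensity fun t => ENNReal.ofReal (f t)) {s u : ℝ} (hsu : s ≤ u) :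
    P.real {ω | Z ω ≤ u} - P.real {ω | Z ω ≤ s} ≤ M * (u - s) := by
  have hdiff : {ω | Z ω ≤ u} \ {ω | Z ω ≤ s} = Z ⁻¹' Ioc s u := by
    ext ω
    simp only [Set.mem_sdiff, mem_ofPred_eq, mem_preimage, mem_Ioc, not_le]
    tauto
  have hsub : {ω | Z ω ≤ s} ⊆ {ω | Z ω ≤ u} := fun ω h => le_trans h hsu
  rw [← measureReal_sdiff hsub (measurableSet_le hZ measurable_const),
    hdiff, ← map_measureReal_apply hZ measurableSet_Ioc, hmap, measureReal_def]
  refine ENNReal.toReal_le_of_le_ofReal (mul_nonneg hM (sub_nonneg.2 hsu)) ?_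
  calc (volume.withDensity fun t => ENNReal.ofReal (f t)) (Ioc s u)
      = ∫⁻ t in Ioc s u, ENNReal.ofReal (f t) := withDensity_apply _ measurableSet_Ioc
    _ ≤ ∫⁻ _ in Ioc s u, ENNReal.ofReal M := lintegral_mono fun t => ENNReal.ofReal_le_ofReal (hf t)
    _ = ENNReal.ofReal (M * (u - s)) := by
      rw [setLIntegral_const, Real.volume_Ioc, ← ENNReal.ofReal_mul hM]

lemma pos_of_map_eq_withDensity [IsProbabilityMeasure P] (hZ : Measurable Z)
    (hf : ∀ t, f t ≤ M) (hmap : P.map Z = volume.withDensity fun t => ENNReal.ofReal (f t)) :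
    0 < M := by
  by_contra! hM
  have hzero : (fun t => ENNReal.ofReal (f t)) = 0 :=
    funext fun t => ENNReal.ofReal_eq_zero.2 ((hf t).trans hM)
  have hprob : IsProbabilityMeasure (P.map Z) := Measure.isProbabilityMeasure_map hZ.aemeasurable
  rw [hmap, hzero, withDensity_zero] at hprob
  exact IsProbabilityMeasure.ne_zero (0 : Measure ℝ) rfl

end Density

section Rectangle

variable {X Y : Ω → ℝ}

lemma measurable_uncurry_indicator_le (hX : Measurable X) :
    Measurable (uncurry fun s : ℝ => {ω | X ω ≤ s}.indicator (1 : Ω → ℝ)) :=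
  measurable_one.indicator (measurableSet_le (hX.comp measurable_snd) measurable_fst)

lemma abs_indicator_one_le {α : Type*} (S : Set α) (a : α) : |S.indicator (1 : α → ℝ) a| ≤ 1 := by
  by_cases h : a ∈ S <;> simp [h]

lemma integrableOn_cdfCovariance [IsFiniteMeasure P] (hX : Measurable X) (hY : Measurable Y)
    (a x b y : ℝ) :
    IntegrableOn (fun p : ℝ × ℝ => cdfCovariance P X Y p.1 p.2) (Icc a x ×ˢ Icc b y) := by
  have h := integrable_cov_prod (P := P) (μ := volume.restrict (Icc a x))
    (ν := volume.restrict (Icc b y)) (measurable_uncurry_indicator_le hX)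
    (measurable_uncurry_indicator_le hY) (fun _ => abs_indicator_one_le _)
    (fun _ => abs_indicator_one_le _)
  simp only [cov_indicator_eq_cdfCovariance hX hY, Measure.prod_restrict] at h
  rwa [IntegrableOn, Measure.volume_eq_prod]

/-- Hoeffding's identity for the clamped variables. -/
theorem cov_min_max_eq_setIntegral_cdfCovariance [IsProbabilityMeasure P] (hX : Measurable X)
    (hY : Measurable Y) {a x b y : ℝ} (hax : a ≤ x) (hby : b ≤ y) :
    cov P (fun ω => min (max (X ω) a) x) (fun ω => min (max (Y ω) b) y)
      = ∫ p in Icc a x ×ˢ Icc b y, cdfCovariance P X Y p.1 p.2 := by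
  have hU : Integrable (fun ω => min (max (X ω) a) x) P :=
    .of_bound ((monotone_min_max a x).measurable.comp hX).aestronglyMeasurable _
      (ae_of_all _ fun ω => abs_min_max_le hax (X ω))
  have hV : Integrable (fun ω => min (max (Y ω) b) y) P :=
    .of_bound ((monotone_min_max b y).measurable.comp hY).aestronglyMeasurable _
      (ae_of_all _ fun ω => abs_min_max_le hby (Y ω))
  have hUV : Integrable (fun ω => min (max (X ω) a) x * min (max (Y ω) b) y) P :=
    hV.bdd_mul hU.aestronglyMeasurable (ae_of_all _ fun ω => abs_min_max_le hax (X ω))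
  rw [← cov_const_sub_const_sub hU hV hUV x y]
  have hX' : ∀ ω, x - min (max (X ω) a) x = ∫ s in Icc a x, {ω | X ω ≤ s}.indicator 1 ω :=
    fun ω => by rw [min_max_eq_sub_integral_indicator hax, sub_sub_cancel]; rfl
  have hY' : ∀ ω, y - min (max (Y ω) b) y = ∫ t in Icc b y, {ω | Y ω ≤ t}.indicator 1 ω :=
    fun ω => by rw [min_max_eq_sub_integral_indicator hby, sub_sub_cancel]; rfl
  simp only [hX', hY']
  rw [cov_integral_integral (measurable_uncurry_indicator_le hX)
    (measurable_uncurry_indicator_le hY) (fun _ => abs_indicator_one_le _)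
    (fun _ => abs_indicator_one_le _)]
  simp only [cov_indicator_eq_cdfCovariance hX hY, Measure.prod_restrict, Measure.volume_eq_prod]

end Rectangle

theorem AssocPair.sq_mul_sub_le_cov [IsProbabilityMeasure P] {X Y : Ω → ℝ} (hA : AssocPair P X Y)
    (hX : Measurable X) (hY : Measurable Y) (hXi : Integrable X P) (hYi : Integrable Y P)
    (hXYi : Integrable (fun ω => X ω * Y ω) P) {M : ℝ} (hM : 0 ≤ M)
    (hFX : ∀ s u, s ≤ u → P.real {ω | X ω ≤ u} - P.real {ω | X ω ≤ s} ≤ M * (u - s))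
    (hFY : ∀ s u, s ≤ u → P.real {ω | Y ω ≤ u} - P.real {ω | Y ω ≤ s} ≤ M * (u - s))
    (x y : ℝ) {δ : ℝ} (hδ : 0 ≤ δ) :
    δ ^ 2 * (cdfCovariance P X Y x y - 2 * M * δ) ≤ cov P X Y := by
  have hbound : ∀ p ∈ Icc (x - δ) x ×ˢ Icc (y - δ) y,
      cdfCovariance P X Y x y - 2 * M * δ ≤ cdfCovariance P X Y p.1 p.2 := by
    rintro ⟨s, t⟩ ⟨⟨hs, hsx⟩, ⟨ht, hty⟩⟩
    have hMs : M * (x - s) ≤ M * δ := mul_le_mul_of_nonneg_left (by linarith) hM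
    have hMt : M * (y - t) ≤ M * δ := mul_le_mul_of_nonneg_left (by linarith) hM
    linarith [cdfCovariance_le_add (P := P) hX hY hsx hty, hFX s x hsx, hFY t y hty]
  have hvol : volume.real (Icc (x - δ) x ×ˢ Icc (y - δ) y) = δ ^ 2 := by
    rw [Measure.volume_eq_prod, measureReal_prod_prod, Real.volume_real_Icc_of_le (by linarith),
      Real.volume_real_Icc_of_le (by linarith)]
    ring
  calc δ ^ 2 * (cdfCovariance P X Y x y - 2 * M * δ)
      = (cdfCovariance P X Y x y - 2 * M * δ) * volume.real (Icc (x - δ) x ×ˢ Icc (y - δ) y) := by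
        rw [hvol, mul_comm]
    _ ≤ ∫ p in Icc (x - δ) x ×ˢ Icc (y - δ) y, cdfCovariance P X Y p.1 p.2 :=
        setIntegral_ge_of_const_le_real (measurableSet_Icc.prod measurableSet_Icc)
          (isCompact_Icc.prod isCompact_Icc).measure_ne_top hbound
          (integrableOn_cdfCovariance hX hY _ _ _ _)
    _ = cov P (fun ω => min (max (X ω) (x - δ)) x) (fun ω => min (max (Y ω) (y - δ)) y) :=
        (cov_min_max_eq_setIntegral_cdfCovariance hX hY (by linarith) (by linarith)).symm
    _ ≤ cov P X Y :=
        hA.cov_comp_le_cov hX hY hXi hYi hXYi (monotone_min_max _ _) (monotone_min_max _ _)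
          (monotone_sub_min_max _ _) (monotone_sub_min_max _ _)
          (abs_min_max_le (by linarith)) (abs_min_max_le (by linarith))

theorem AssocPair.cdfCovariance_pow_three_le [IsProbabilityMeasure P] {X Y : Ω → ℝ}
    (hA : AssocPair P X Y) (hX : Measurable X) (hY : Measurable Y) (hXi : Integrable X P)
    (hYi : Integrable Y P) (hXYi : Integrable (fun ω => X ω * Y ω) P) {M : ℝ} (hM : 0 < M)
    (hFX : ∀ s u, s ≤ u → P.real {ω | X ω ≤ u} - P.real {ω | X ω ≤ s} ≤ M * (u - s))
    (hFY : ∀ s u, s ≤ u → P.real {ω | Y ω ≤ u} - P.real {ω | Y ω ≤ s} ≤ M * (u - s))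
    (x y : ℝ) : cdfCovariance P X Y x y ^ 3 ≤ 27 * M ^ 2 * cov P X Y := by
  set H := cdfCovariance P X Y x y
  -- `δ = H / (3M)` maximizes `δ² (H - 2Mδ)`.
  have hH : 0 ≤ H := hA.cdfCovariance_nonneg hX hY x y
  have h := hA.sq_mul_sub_le_cov hX hY hXi hYi hXYi hM.le hFX hFY x y
    (δ := H / (3 * M)) (by positivity)
  have hδ : (H / (3 * M)) ^ 2 * (H - 2 * M * (H / (3 * M))) = H ^ 3 / (27 * M ^ 2) := by
    field_simp
    ring
  rwa [hδ, div_le_iff₀ (by positivity), mul_comm] at h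

lemma le_three_mul_rpow_of_pow_three_le {h M C : ℝ} (hM : 0 ≤ M) (hC : 0 ≤ C)
    (hcube : h ^ 3 ≤ 27 * M ^ 2 * C) : h ≤ 3 * M ^ ((2 : ℝ) / 3) * C ^ ((1 : ℝ) / 3) := by
  have hR : (3 * M ^ ((2 : ℝ) / 3) * C ^ ((1 : ℝ) / 3)) ^ 3 = 27 * M ^ 2 * C := by
    rw [mul_pow, mul_pow, ← Real.rpow_mul_natCast hM, ← Real.rpow_mul_natCast hC]
    norm_num
  exact le_of_pow_le_pow_left₀ (by norm_num) (by positivity) (hR ▸ hcube)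

theorem bagai_prakasa_rao_inequality :
    ∃ c : ℝ, 0 < c ∧
      ∀ (Ω : Type) [MeasurableSpace Ω] (P : Measure Ω), IsProbabilityMeasure P →
      ∀ X Y : Ω → ℝ, Measurable X → Measurable Y →
      AssocPair P X Y →
      -- the covariance of X and Y exists
      Integrable X P → Integrable Y P → Integrable (fun ω => X ω * Y ω) P →
      -- bounded continuous densities
      ∀ fX fY : ℝ → ℝ, Continuous fX → Continuous fY →
      (∀ x, 0 ≤ fX x) → (∀ y, 0 ≤ fY y) →
      BddAbove (Set.range fX) → BddAbove (Set.range fY) →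
      Measure.map X P = MeasureTheory.volume.withDensity (fun x => ENNReal.ofReal (fX x)) →
      Measure.map Y P = MeasureTheory.volume.withDensity (fun y => ENNReal.ofReal (fY y)) →
      ∀ x y : ℝ,
        |(P {ω | X ω ≤ x ∧ Y ω ≤ y}).toReal
            - (P {ω | X ω ≤ x}).toReal * (P {ω | Y ω ≤ y}).toReal|
          ≤ c * max (⨆ x', fX x') (⨆ y', fY y') ^ ((2 : ℝ) / 3)
              * cov P X Y ^ ((1 : ℝ) / 3) := by
  refine ⟨3, by norm_num, ?_⟩
  intro Ω _ P _ X Y hX hY hA hXi hYi hXYi fX fY _ _ _ _ hbX hbY hmapX hmapY x y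
  set M := max (⨆ x', fX x') (⨆ y', fY y')
  have hfX : ∀ t, fX t ≤ M := fun t => (le_ciSup hbX t).trans (le_max_left _ _)
  have hfY : ∀ t, fY t ≤ M := fun t => (le_ciSup hbY t).trans (le_max_right _ _)
  have hM : 0 < M := pos_of_map_eq_withDensity hX hfX hmapX
  have hcube := hA.cdfCovariance_pow_three_le hX hY hXi hYi hXYi hM
    (fun _ _ => cdf_sub_le_of_map_eq_withDensity hX hM.le hfX hmapX)
    (fun _ _ => cdf_sub_le_of_map_eq_withDensity hY hM.le hfY hmapY) x y
  have hH : 0 ≤ cdfCovariance P X Y x y := hA.cdfCovariance_nonneg hX hY x y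
  have hcov : 0 ≤ cov P X Y :=
    hA Prod.fst Prod.snd measurable_fst measurable_snd monotone_fst monotone_snd hXi hYi hXYi
  exact (abs_of_nonneg hH).trans_le (le_three_mul_rpow_of_pow_three_le hM.le hcov hcube)
end
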